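/- arXiv:1904.06311 — 7 statements merged into one kernel-verified Lean document; each statement's English description precedes it below -/
import Mathlib

section
/- Let D ≥ 1, let H be a real Hilbert space, let a : ℝ^D → H be a map, and set κ(θ,θ') := ⟨a(θ), a(θ')⟩ for θ,θ' ∈ ℝ^D. Assume κ is an admissible kernel and that S = {θ_1,…,θ_k} ⊆ ℝ^D (with θ_1,…,θ_k pairwise distinct) is admissible with respect to κ. Then the atoms a(θ_1),…,a(θ_k) are linearly independent in H. -/
/-!
A linear relation among the atoms, normalised to total mass below one and split by sign, makes
two kernel sums `ψ_P = Σ_{ℓ ∈ P} c_ℓ κ(·, θ_ℓ)` and `ψ_N = Σ_{ℓ ∈ N} c_ℓ κ(·, θ_ℓ)` with disjoint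
supports agree everywhere. The feature map is continuous and the kernel vanishes at infinity, so
`ψ_P` attains its maximum; by admissibility of the support the maximiser is a point of both `P`
and `N`, which is absurd.
-/

/-- A kernel on `ℝ^D` satisfies the vanishing property. -/
def VanishingProperty {D : ℕ} (κ : (Fin D → ℝ) → (Fin D → ℝ) → ℝ) : Prop :=
  ∀ ε : ℝ, 0 < ε → ∀ θ : Fin D → ℝ,
    ∃ K : Set (Fin D → ℝ), IsCompact K ∧ ∀ θ' ∉ K, κ θ' θ < ε

/-- An admissible kernel: unit norm on the diagonal, continuity, vanishing property,
and `0 ≤ κ(θ,θ') < 1` off the diagonal. -/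
def AdmissibleKernel {D : ℕ} (κ : (Fin D → ℝ) → (Fin D → ℝ) → ℝ) : Prop :=
  (∀ θ, κ θ θ = 1) ∧
  (∀ θ, Filter.Tendsto (fun θ' => κ θ θ') (nhds θ) (nhds 1)) ∧
  VanishingProperty κ ∧
  (∀ θ θ', θ ≠ θ' → 0 ≤ κ θ θ' ∧ κ θ θ' < 1)

/-- A finite family of pairwise distinct points `θs : Fin k → ℝ^D` is admissible
with respect to the kernel `κ`. -/
def AdmissibleSupport {D k : ℕ} (κ : (Fin D → ℝ) → (Fin D → ℝ) → ℝ)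
    (θs : Fin k → (Fin D → ℝ)) : Prop :=
  ∀ T : Finset (Fin k), T.Nonempty →
    ∀ c : Fin k → ℝ, (∀ ℓ ∈ T, 0 < c ℓ) → (∑ ℓ ∈ T, c ℓ) < 1 →
      ((∀ θm : Fin D → ℝ,
          (∀ θ : Fin D → ℝ,
            (∑ ℓ ∈ T, c ℓ * κ θ (θs ℓ)) ≤ ∑ ℓ ∈ T, c ℓ * κ θm (θs ℓ)) →
          ∃ ℓ ∈ T, θm = θs ℓ) ∧
       (∀ ℓ : Fin k, ℓ ∉ T →
          (∀ ℓ' ∈ T, (∑ j ∈ T, c j * κ (θs ℓ') (θs j)) - κ (θs ℓ') (θs ℓ) ≤ 0) →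
          ∀ θ : Fin D → ℝ, (∑ j ∈ T, c j * κ θ (θs j)) - κ θ (θs ℓ) ≤ 0))

open Filter Topology Finset
open scoped InnerProductSpace

theorem continuous_of_inner_self_eq_one {X E : Type*} [TopologicalSpace X]
    [NormedAddCommGroup E] [InnerProductSpace ℝ E] {a : X → E}
    (h_self : ∀ x, ⟪a x, a x⟫_ℝ = 1) (h : ∀ x, Tendsto (fun y => ⟪a x, a y⟫_ℝ) (𝓝 x) (𝓝 1)) :
    Continuous a := by
  refine continuous_iff_continuousAt.2 fun x => tendsto_iff_norm_sub_tendsto_zero.2 ?_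
  have hsq : ∀ y, ‖a y - a x‖ ^ 2 = 2 - 2 * ⟪a x, a y⟫_ℝ := fun y => by
    rw [norm_sub_sq_real, ← real_inner_self_eq_norm_sq, ← real_inner_self_eq_norm_sq, h_self,
      h_self, real_inner_comm]
    ring
  have hlim : Tendsto (fun y => ‖a y - a x‖ ^ 2) (𝓝 x) (𝓝 0) := by
    simpa [hsq] using ((h x).const_mul 2).const_sub 2
  simpa [Real.sqrt_sq (norm_nonneg _)] using hlim.sqrt

theorem sum_mul_eq_sum_pos_sub_sum_neg {ι : Type*} [Fintype ι] (d f : ι → ℝ) :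
    ∑ i, d i * f i =
      ∑ i with 0 < d i, |d i| * f i - ∑ i with d i < 0, |d i| * f i := by
  rw [sum_filter, sum_filter, ← sum_sub_distrib]
  refine sum_congr rfl fun i _ => ?_
  rcases lt_trichotomy (d i) 0 with h | h | h
  · simp [h, h.not_gt, abs_of_neg h]
  · simp [h]
  · simp [h, h.not_gt, abs_of_pos h]

theorem exists_mul_pos_sum_abs_mul_lt_one {ι : Type*} [Fintype ι] {g : ι → ℝ} {i₀ : ι}
    (h : g i₀ ≠ 0) : ∃ r : ℝ, 0 < r * g i₀ ∧ ∑ i, |r * g i| < 1 := by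
  set s := ∑ i, |g i|
  have hs : 0 ≤ s := sum_nonneg fun i _ => abs_nonneg (g i)
  have hden : 0 < 1 + |g i₀| * s := by positivity
  refine ⟨g i₀ / (1 + |g i₀| * s), ?_, ?_⟩
  · rw [div_mul_eq_mul_div, ← sq]
    positivity
  · simp_rw [abs_mul, ← mul_sum, abs_div, abs_of_pos hden]
    rw [div_mul_eq_mul_div, div_lt_one hden]
    linarith

section Kernel

variable {D k : ℕ} {κ : (Fin D → ℝ) → (Fin D → ℝ) → ℝ}

theorem AdmissibleKernel.nonneg (hker : AdmissibleKernel κ) (θ θ' : Fin D → ℝ) :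
    0 ≤ κ θ θ' := by
  rcases eq_or_ne θ θ' with rfl | h
  · exact hker.1 θ ▸ zero_le_one
  · exact (hker.2.2.2 θ θ' h).1

theorem AdmissibleKernel.tendsto_cocompact (hker : AdmissibleKernel κ) (θ : Fin D → ℝ) :
    Tendsto (κ · θ) (cocompact _) (𝓝 0) := by
  refine tendsto_order.2 ⟨fun b hb => .of_forall fun θ' => hb.trans_le (hker.nonneg θ' θ),
    fun ε hε => ?_⟩
  obtain ⟨K, hK, hlt⟩ := hker.2.2.1 ε hε θ
  exact mem_cocompact.2 ⟨K, hK, fun θ' hθ' => hlt θ' hθ'⟩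

theorem AdmissibleKernel.sum_mul_pos (hker : AdmissibleKernel κ) (θs : Fin k → Fin D → ℝ)
    {T : Finset (Fin k)} {c : Fin k → ℝ} (hc : ∀ ℓ ∈ T, 0 < c ℓ) {p : Fin k} (hp : p ∈ T) :
    0 < ∑ ℓ ∈ T, c ℓ * κ (θs p) (θs ℓ) := by
  refine lt_of_lt_of_le ?_ (single_le_sum (fun ℓ hℓ => ?_) hp)
  · simpa [hker.1] using hc p hp
  · exact mul_nonneg (hc ℓ hℓ).le (hker.nonneg _ _)

theorem AdmissibleKernel.exists_forall_sum_le (hker : AdmissibleKernel κ)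
    (hcont : ∀ θ', Continuous (κ · θ')) (θs : Fin k → Fin D → ℝ) {T : Finset (Fin k)}
    (hT : T.Nonempty) {c : Fin k → ℝ} (hc : ∀ ℓ ∈ T, 0 < c ℓ) :
    ∃ θm, ∀ θ, ∑ ℓ ∈ T, c ℓ * κ θ (θs ℓ) ≤ ∑ ℓ ∈ T, c ℓ * κ θm (θs ℓ) := by
  obtain ⟨p, hp⟩ := hT
  have hψ : Continuous fun θ => ∑ ℓ ∈ T, c ℓ * κ θ (θs ℓ) :=
    continuous_finsetSum _ fun ℓ _ => continuous_const.mul (hcont _)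
  have hlim : Tendsto (fun θ => ∑ ℓ ∈ T, c ℓ * κ θ (θs ℓ)) (cocompact _) (𝓝 0) := by
    simpa using tendsto_finsetSum T fun ℓ _ => (hker.tendsto_cocompact (θs ℓ)).const_mul (c ℓ)
  exact hψ.exists_forall_ge' (θs p)
    ((hlim.eventually (gt_mem_nhds (hker.sum_mul_pos θs hc hp))).mono fun _ => le_of_lt)

variable {θs : Fin k → Fin D → ℝ}

theorem AdmissibleSupport.exists_sum_ne_sum_of_disjoint (hsupp : AdmissibleSupport κ θs)
    (hker : AdmissibleKernel κ) (hcont : ∀ θ', Continuous (κ · θ'))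
    (hinj : Function.Injective θs) {P N : Finset (Fin k)} (hPN : Disjoint P N)
    (hP : P.Nonempty) {c : Fin k → ℝ} (hcP : ∀ ℓ ∈ P, 0 < c ℓ) (hcN : ∀ ℓ ∈ N, 0 < c ℓ)
    (hsumP : ∑ ℓ ∈ P, c ℓ < 1) (hsumN : ∑ ℓ ∈ N, c ℓ < 1) :
    ∃ θ, ∑ ℓ ∈ P, c ℓ * κ θ (θs ℓ) ≠ ∑ ℓ ∈ N, c ℓ * κ θ (θs ℓ) := by
  by_contra! heq
  obtain ⟨θm, hθm⟩ := hker.exists_forall_sum_le hcont θs hP hcP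
  obtain ⟨p, hp, rfl⟩ := (hsupp P hP c hcP hsumP).1 θm hθm
  have hN : N.Nonempty :=
    nonempty_of_sum_ne_zero (heq (θs p) ▸ (hker.sum_mul_pos θs hcP hp).ne')
  obtain ⟨n, hn, hpn⟩ := (hsupp N hN c hcN hsumN).1 (θs p) fun θ => by
    simpa only [heq] using hθm θ
  exact disjoint_left.1 hPN hp (hinj hpn ▸ hn)

theorem AdmissibleSupport.linearIndependent_kernel (hsupp : AdmissibleSupport κ θs)
    (hker : AdmissibleKernel κ) (hcont : ∀ θ', Continuous (κ · θ'))
    (hinj : Function.Injective θs) :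
    LinearIndependent ℝ fun ℓ θ => κ θ (θs ℓ) := by
  rw [Fintype.linearIndependent_iff]
  intro g hg
  by_contra! ⟨i₀, hi₀⟩
  obtain ⟨r, hr₀, hr₁⟩ := exists_mul_pos_sum_abs_mul_lt_one hi₀
  set d := fun i => r * g i
  have hsum : ∀ T : Finset (Fin k), ∑ i ∈ T, |d i| < 1 := fun T =>
    (sum_le_univ_sum_of_nonneg fun _ => abs_nonneg _).trans_lt hr₁
  obtain ⟨θ, hθ⟩ := hsupp.exists_sum_ne_sum_of_disjoint hker hcont hinj
    (P := {i | 0 < d i}) (N := {i | d i < 0}) (disjoint_filter.2 fun i _ h => h.not_gt)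
    ⟨i₀, mem_filter.2 ⟨mem_univ _, hr₀⟩⟩ (fun i hi => abs_pos.2 (mem_filter.1 hi).2.ne')
    (fun i hi => abs_pos.2 (mem_filter.1 hi).2.ne) (hsum _) (hsum _)
  refine hθ (sub_eq_zero.1 ?_)
  rw [← sum_mul_eq_sum_pos_sub_sum_neg]
  simpa [d, mul_assoc, ← mul_sum] using congrArg (r * ·) (congrFun hg θ)

end Kernel

theorem atoms_linearIndependent_of_admissible_general
    {D k : ℕ} {H : Type*} [NormedAddCommGroup H]
    [InnerProductSpace ℝ H]
    (a : (Fin D → ℝ) → H)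
    (κ : (Fin D → ℝ) → (Fin D → ℝ) → ℝ)
    (hκ : ∀ θ θ' : Fin D → ℝ, κ θ θ' = inner ℝ (a θ) (a θ'))
    (hker : AdmissibleKernel κ)
    (θs : Fin k → (Fin D → ℝ)) (hinj : Function.Injective θs)
    (hsupp : AdmissibleSupport κ θs) :
    LinearIndependent ℝ (fun ℓ => a (θs ℓ)) := by
  have ha : Continuous a := continuous_of_inner_self_eq_one (fun θ => hκ θ θ ▸ hker.1 θ)
    fun θ => by simpa only [hκ] using hker.2.1 θ
  have hcont : ∀ θ', Continuous (κ · θ') := fun θ' => by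
    simpa only [hκ] using ha.inner continuous_const
  have hcomp : (LinearMap.pi fun θ => innerₛₗ ℝ (a θ)) ∘ (fun ℓ => a (θs ℓ)) =
      fun ℓ θ => κ θ (θs ℓ) := by
    ext ℓ θ
    simp [hκ]
  exact .of_comp _ (hcomp ▸ hsupp.linearIndependent_kernel hker hcont hinj)

/-- if the kernel is admissible and the support is admissible with
respect to it, then the atoms are linearly independent. -/
theorem atoms_linearIndependent_of_admissible
    {D k : ℕ} (hD : 1 ≤ D) {H : Type*} [NormedAddCommGroup H]
    [InnerProductSpace ℝ H] [CompleteSpace H]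
    (a : (Fin D → ℝ) → H)
    (κ : (Fin D → ℝ) → (Fin D → ℝ) → ℝ)
    (hκ : ∀ θ θ' : Fin D → ℝ, κ θ θ' = inner ℝ (a θ) (a θ'))
    (hker : AdmissibleKernel κ)
    (θs : Fin k → (Fin D → ℝ)) (hinj : Function.Injective θs)
    (hsupp : AdmissibleSupport κ θs) :
    LinearIndependent ℝ (fun ℓ => a (θs ℓ)) :=
  atoms_linearIndependent_of_admissible_general a κ hκ hker θs hinj hsupp
end

section
/- Let D ≥ 1, let H be a real Hilbert space, let a : ℝ^D → H be a map, and set κ(θ,θ') := ⟨a(θ), a(θ')⟩ for θ,θ' ∈ ℝ^D. Assume κ is an admissible kernel and that S = {θ_1,…,θ_k} ⊆ ℝ^D (with θ_1,…,θ_k pairwise distinct) is admissible with respect to κ. Then the Gram matrix G ∈ ℝ^{k×k} with entries G[ℓ,ℓ'] = κ(θ_ℓ, θ_{ℓ'}) is invertible, and for every θ ∈ ℝ^D \ S one has ‖G⁻¹ g_θ‖₁ < 1, where g_θ ∈ ℝ^k has entries g_θ[ℓ] = κ(θ, θ_ℓ). -/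
/-!
The feature vectors `a θ_ℓ` are linearly independent: a vanishing combination splits into two
positive combinations with disjoint supports that define the same function; its global maximiser
(which exists by continuity and the vanishing property) must be an atom of both supports by
admissibility (i), contradicting injectivity.

Hence every Gram system `G_T v = b` over a subset `T` of the atoms is solvable, and eliminating the
unknown `v_ℓ` gives `v_ℓ ‖e_ℓ - ∑ c_j e_j‖² = b_ℓ - ∑ c_j b_j`, where `e_j = a θ_j` and `c` solves
the system on `T \ {ℓ}` with right-hand side `κ(θ_ℓ, ·)`. By strong induction on `T`, for `ℓ₀ ∉ T`
the solution `v` of `G_T v = κ(θ_ℓ₀, ·)` has mass `∑ v < 1` and satisfies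
`∑ v_j κ(·, θ_j) ≤ κ(·, θ_ℓ₀)` everywhere. Indeed, the elimination formula turns the induction
hypothesis into `v ≥ 0`; the mass is `∑ q_j κ(θ_ℓ₀, θ_j)` where `G_T q = 1`, `q > 0`, and a positive
combination equal to `1` at the atoms is `< 1` elsewhere by (i); then (ii) gives the bound.
For `T` the whole support, positivity and the mass bound say exactly `‖G⁻¹ g_θ‖₁ < 1`.
-/

open Filter Topology Finset
open scoped InnerProductSpace

lemma sum_filter_pos_mul {ι : Type*} {T : Finset ι} {c : ι → ℝ} (hc : ∀ j ∈ T, 0 ≤ c j)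
    (f : ι → ℝ) : ∑ j ∈ T with 0 < c j, c j * f j = ∑ j ∈ T, c j * f j :=
  sum_filter_of_ne fun j hj hne => (hc j hj).lt_of_ne' (left_ne_zero_of_mul hne)

section GramSystem

variable {ι H : Type*} [NormedAddCommGroup H] [InnerProductSpace ℝ H]

def IsGramSolution (e : ι → H) (T : Finset ι) (b v : ι → ℝ) : Prop :=
  ∀ ℓ ∈ T, ∑ j ∈ T, v j * ⟪e ℓ, e j⟫_ℝ = b ℓ

lemma inner_sum_smul (x : H) (e : ι → H) (T : Finset ι) (v : ι → ℝ) :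
    ⟪x, ∑ j ∈ T, v j • e j⟫_ℝ = ∑ j ∈ T, v j * ⟪x, e j⟫_ℝ := by
  simp only [inner_sum, real_inner_smul_right]

namespace IsGramSolution

variable {e : ι → H} {T : Finset ι} {b v : ι → ℝ}

lemma inner_sum_smul_eq (hv : IsGramSolution e T b v) {ℓ : ι} (hℓ : ℓ ∈ T) :
    ⟪e ℓ, ∑ j ∈ T, v j • e j⟫_ℝ = b ℓ := by
  rw [inner_sum_smul, hv ℓ hℓ]

lemma sum_mul_eq_inner (hv : IsGramSolution e T b v) {S : Finset ι} (hS : S ⊆ T) (u : ι → ℝ) :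
    ∑ j ∈ S, u j * b j = ⟪∑ j ∈ S, u j • e j, ∑ j ∈ T, v j • e j⟫_ℝ := by
  rw [sum_inner]
  exact sum_congr rfl fun j hj => by rw [real_inner_smul_left, hv.inner_sum_smul_eq (hS hj)]

lemma sum_mul_comm {b' v' : ι → ℝ} (hv : IsGramSolution e T b v)
    (hv' : IsGramSolution e T b' v') :
    ∑ j ∈ T, v j * b' j = ∑ j ∈ T, v' j * b j := by
  rw [hv'.sum_mul_eq_inner subset_rfl, hv.sum_mul_eq_inner subset_rfl, real_inner_comm]

lemma mul_norm_sq_eq [DecidableEq ι] {ℓ : ι} {c : ι → ℝ} (hv : IsGramSolution e T b v)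
    (hℓ : ℓ ∈ T) (hc : IsGramSolution e (T.erase ℓ) (fun j => ⟪e ℓ, e j⟫_ℝ) c) :
    v ℓ * ‖e ℓ - ∑ j ∈ T.erase ℓ, c j • e j‖ ^ 2 = b ℓ - ∑ j ∈ T.erase ℓ, c j * b j := by
  set y := e ℓ - ∑ j ∈ T.erase ℓ, c j • e j
  have hy : ∀ j ∈ T.erase ℓ, ⟪y, e j⟫_ℝ = 0 := fun j hj => by
    rw [real_inner_comm, inner_sub_right, hc.inner_sum_smul_eq hj, real_inner_comm, sub_self]
  have hyℓ : ⟪y, e ℓ⟫_ℝ = ‖y‖ ^ 2 := by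
    have he : e ℓ = y + ∑ j ∈ T.erase ℓ, c j • e j := (sub_add_cancel _ _).symm
    rw [he, inner_add_right, inner_sum_smul,
      sum_eq_zero fun j hj => by rw [hy j hj, mul_zero], add_zero, real_inner_self_eq_norm_sq]
  calc v ℓ * ‖y‖ ^ 2 = ⟪y, ∑ j ∈ T, v j • e j⟫_ℝ := by
        rw [inner_sum_smul, ← add_sum_erase T _ hℓ,
          sum_eq_zero fun j hj => by rw [hy j hj, mul_zero], add_zero, hyℓ]
    _ = b ℓ - ∑ j ∈ T.erase ℓ, c j * b j := by
        rw [inner_sub_left, hv.inner_sum_smul_eq hℓ, hv.sum_mul_eq_inner (erase_subset ℓ T)]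

end IsGramSolution

lemma LinearIndependent.exists_isGramSolution {e : ι → H} (he : LinearIndependent ℝ e)
    (T : Finset ι) (b : ι → ℝ) : ∃ v, IsGramSolution e T b v := by
  classical
  have hdet : (Matrix.gram ℝ fun j : T => e j).det ≠ 0 :=
    Matrix.det_gram_ne_zero_iff_linearIndependent.2 (he.comp _ Subtype.val_injective)
  obtain ⟨w, hw⟩ := Matrix.mulVec_surjective_iff_isUnit.2
    ((Matrix.isUnit_iff_isUnit_det _).2 hdet.isUnit) fun ℓ : T => b ℓ
  refine ⟨fun j => if h : j ∈ T then w ⟨j, h⟩ else 0, fun ℓ hℓ => ?_⟩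
  rw [← sum_coe_sort T]
  simpa [Matrix.mulVec, dotProduct, Matrix.gram_apply, mul_comm] using congrFun hw ⟨ℓ, hℓ⟩

lemma LinearIndependent.sub_sum_smul_ne_zero {e : ι → H} (he : LinearIndependent ℝ e)
    {T : Finset ι} {ℓ : ι} (hℓ : ℓ ∉ T) (c : ι → ℝ) : e ℓ - ∑ j ∈ T, c j • e j ≠ 0 := by
  rw [sub_ne_zero]
  refine fun h => he.notMem_span_image (s := T) hℓ (h ▸ Submodule.sum_mem _ fun j hj => ?_)
  exact Submodule.smul_mem _ _ (Submodule.subset_span ⟨j, hj, rfl⟩)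

end GramSystem

section Admissibility

variable {D : ℕ} {κ : (Fin D → ℝ) → (Fin D → ℝ) → ℝ}

namespace AdmissibleKernel

lemma nonneg_s2 (hker : AdmissibleKernel κ) (θ θ' : Fin D → ℝ) : 0 ≤ κ θ θ' := by
  rcases eq_or_ne θ θ' with rfl | h
  · exact (hker.1 θ).symm ▸ zero_le_one
  · exact (hker.2.2.2 θ θ' h).1

lemma tendsto_cocompact_s2 (hker : AdmissibleKernel κ) (θ₀ : Fin D → ℝ) :
    Tendsto (fun θ => κ θ θ₀) (cocompact _) (𝓝 0) := by
  refine tendsto_order.2 ⟨fun ε hε => .of_forall fun θ => hε.trans_le (hker.nonneg_s2 θ θ₀),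
    fun ε hε => ?_⟩
  obtain ⟨K, hK, hlt⟩ := hker.2.2.1 ε hε θ₀
  exact mem_cocompact.2 ⟨K, hK, fun θ hθ => hlt θ hθ⟩

variable {ι : Type*} {T : Finset ι} {c : ι → ℝ}

lemma sum_mul_pos_s2 (hker : AdmissibleKernel κ) (θs : ι → Fin D → ℝ) (hc : ∀ ℓ ∈ T, 0 < c ℓ)
    {ℓ : ι} (hℓ : ℓ ∈ T) : 0 < ∑ j ∈ T, c j * κ (θs ℓ) (θs j) :=
  sum_pos' (fun j hj => mul_nonneg (hc j hj).le (hker.nonneg_s2 _ _))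
    ⟨ℓ, hℓ, by rw [hker.1, mul_one]; exact hc ℓ hℓ⟩

lemma exists_forall_sum_mul_le (hker : AdmissibleKernel κ)
    (hcont : ∀ θ₀, Continuous fun θ => κ θ θ₀) (θs : ι → Fin D → ℝ) (hT : T.Nonempty)
    (hc : ∀ ℓ ∈ T, 0 < c ℓ) :
    ∃ θm, ∀ θ, ∑ j ∈ T, c j * κ θ (θs j) ≤ ∑ j ∈ T, c j * κ θm (θs j) := by
  obtain ⟨ℓ, hℓ⟩ := hT
  have hlim : Tendsto (fun θ => ∑ j ∈ T, c j * κ θ (θs j)) (cocompact _) (𝓝 0) := by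
    simpa using tendsto_finsetSum T fun j _ => (hker.tendsto_cocompact_s2 (θs j)).const_mul (c j)
  exact (continuous_finsetSum T fun j _ => continuous_const.mul (hcont (θs j))).exists_forall_ge'
    (θs ℓ) ((hlim.eventually (gt_mem_nhds (hker.sum_mul_pos_s2 θs hc hℓ))).mono fun _ => le_of_lt)

end AdmissibleKernel

namespace AdmissibleSupport

variable {k : ℕ} {θs : Fin k → Fin D → ℝ} {T : Finset (Fin k)} {c : Fin k → ℝ}

lemma exists_eq_of_forall_le (hsupp : AdmissibleSupport κ θs) (hT : T.Nonempty)
    (hc : ∀ ℓ ∈ T, 0 < c ℓ) {θm : Fin D → ℝ}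
    (hmax : ∀ θ, ∑ j ∈ T, c j * κ θ (θs j) ≤ ∑ j ∈ T, c j * κ θm (θs j)) :
    ∃ ℓ ∈ T, θm = θs ℓ := by
  have hs : 0 < ∑ j ∈ T, c j := sum_pos hc hT
  have ht : 0 < (1 + ∑ j ∈ T, c j)⁻¹ := by positivity
  refine (hsupp T hT (fun j => (1 + ∑ j ∈ T, c j)⁻¹ * c j) (fun j hj => mul_pos ht (hc j hj))
    ?_).1 θm fun θ => ?_
  · rw [← mul_sum, inv_mul_lt_iff₀ (by positivity)]
    linarith
  · simp only [mul_assoc, ← mul_sum]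
    exact mul_le_mul_of_nonneg_left (hmax θ) ht.le

lemma sum_mul_lt (hsupp : AdmissibleSupport κ θs) (hker : AdmissibleKernel κ)
    (hcont : ∀ θ₀, Continuous fun θ => κ θ θ₀) (hT : T.Nonempty) (hc : ∀ ℓ ∈ T, 0 < c ℓ)
    {β : ℝ} (hβ : ∀ ℓ ∈ T, ∑ j ∈ T, c j * κ (θs ℓ) (θs j) = β) {τ : Fin D → ℝ}
    (hτ : ∀ ℓ ∈ T, τ ≠ θs ℓ) : ∑ j ∈ T, c j * κ τ (θs j) < β := by
  obtain ⟨θm, hmax⟩ := hker.exists_forall_sum_mul_le hcont θs hT hc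
  obtain ⟨m, hm, rfl⟩ := hsupp.exists_eq_of_forall_le hT hc hmax
  rw [hβ m hm] at hmax
  refine (hmax τ).lt_of_ne fun hτβ => ?_
  obtain ⟨ℓ, hℓ, rfl⟩ := hsupp.exists_eq_of_forall_le hT hc fun θ => hτβ ▸ hmax θ
  exact hτ ℓ hℓ rfl

lemma sum_mul_le (hsupp : AdmissibleSupport κ θs) (hker : AdmissibleKernel κ)
    (hc : ∀ ℓ ∈ T, 0 ≤ c ℓ) (hsum : ∑ j ∈ T, c j < 1) {ℓ₀ : Fin k} (hℓ₀ : ℓ₀ ∉ T)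
    (hle : ∀ ℓ ∈ T, ∑ j ∈ T, c j * κ (θs ℓ) (θs j) ≤ κ (θs ℓ) (θs ℓ₀)) (θ : Fin D → ℝ) :
    ∑ j ∈ T, c j * κ θ (θs j) ≤ κ θ (θs ℓ₀) := by
  classical
  set T' := T.filter fun j => 0 < c j
  have hT' : ∀ f : Fin k → ℝ, ∑ j ∈ T', c j * f j = ∑ j ∈ T, c j * f j := sum_filter_pos_mul hc
  rcases T'.eq_empty_or_nonempty with hempty | hne
  · rw [← hT', hempty, sum_empty]
    exact hker.nonneg_s2 _ _
  have h := (hsupp T' hne c (fun j hj => (mem_filter.1 hj).2) ?_).2 ℓ₀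
    (fun h => hℓ₀ (mem_of_mem_filter _ h)) (fun ℓ hℓ => ?_) θ
  · rwa [hT', sub_nonpos] at h
  · exact (sum_filter_of_ne fun j hj => (hc j hj).lt_of_ne').trans_lt hsum
  · rw [hT', sub_nonpos]
    exact hle ℓ (mem_of_mem_filter _ hℓ)

end AdmissibleSupport

end Admissibility

section FeatureKernel

variable {D : ℕ} {H : Type*} [NormedAddCommGroup H] [InnerProductSpace ℝ H]
  {a : (Fin D → ℝ) → H}

lemma AdmissibleKernel.continuous_feature (hker : AdmissibleKernel fun θ θ' => ⟪a θ, a θ'⟫_ℝ) :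
    Continuous a := by
  refine continuous_iff_continuousAt.2 fun θ => tendsto_iff_norm_sub_tendsto_zero.2 ?_
  have hnorm : ∀ θ, ‖a θ‖ ^ 2 = 1 := fun θ => by
    rw [← real_inner_self_eq_norm_sq]; exact hker.1 θ
  have hdist : ∀ θ', ‖a θ' - a θ‖ = √(2 - 2 * ⟪a θ, a θ'⟫_ℝ) := fun θ' => by
    rw [← Real.sqrt_sq (norm_nonneg _), norm_sub_sq_real, hnorm, hnorm, real_inner_comm]
    ring_nf
  simp_rw [hdist]
  simpa using ((hker.2.1 θ).const_mul 2).const_sub 2 |>.sqrt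

lemma AdmissibleKernel.continuous_inner_feature
    (hker : AdmissibleKernel fun θ θ' => ⟪a θ, a θ'⟫_ℝ) (θ₀ : Fin D → ℝ) :
    Continuous fun θ => ⟪a θ, a θ₀⟫_ℝ :=
  hker.continuous_feature.inner continuous_const

variable {k : ℕ} {θs : Fin k → Fin D → ℝ}

lemma AdmissibleSupport.linearIndependent_feature
    (hker : AdmissibleKernel fun θ θ' => ⟪a θ, a θ'⟫_ℝ)
    (hsupp : AdmissibleSupport (fun θ θ' => ⟪a θ, a θ'⟫_ℝ) θs) (hinj : Function.Injective θs) :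
    LinearIndependent ℝ fun j => a (θs j) := by
  classical
  suffices hneg : ∀ u : Fin k → ℝ, ∑ j, u j • a (θs j) = 0 → ∀ j, u j ≤ 0 by
    refine Fintype.linearIndependent_iff.2 fun u hu j => le_antisymm (hneg u hu j) ?_
    simpa using hneg (-u) (by simp [neg_smul, hu]) j
  intro u hu ℓ
  by_contra! hℓ
  set P := univ.filter fun j => 0 < (u j)⁺
  set N := univ.filter fun j => 0 < (u j)⁻
  have hPN : ∀ θ, ∑ j ∈ P, (u j)⁺ * ⟪a θ, a (θs j)⟫_ℝ = ∑ j ∈ N, (u j)⁻ * ⟪a θ, a (θs j)⟫_ℝ := by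
    intro θ
    have h := congrArg (fun x => ⟪a θ, x⟫_ℝ) hu
    simp only [inner_sum_smul, inner_zero_right] at h
    rw [sum_filter_pos_mul (fun j _ => posPart_nonneg _),
      sum_filter_pos_mul (fun j _ => negPart_nonneg _), ← sub_eq_zero, ← sum_sub_distrib]
    simpa only [← sub_mul, posPart_sub_negPart] using h
  have hP : P.Nonempty := ⟨ℓ, by simpa [P] using hℓ⟩
  have hPpos : ∀ j ∈ P, 0 < (u j)⁺ := fun j hj => (mem_filter.1 hj).2
  have hNpos : ∀ j ∈ N, 0 < (u j)⁻ := fun j hj => (mem_filter.1 hj).2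
  obtain ⟨θm, hmax⟩ := hker.exists_forall_sum_mul_le hker.continuous_inner_feature θs hP hPpos
  obtain ⟨p, hp, rfl⟩ := hsupp.exists_eq_of_forall_le hP hPpos hmax
  have hN : N.Nonempty := by
    rw [nonempty_iff_ne_empty]
    intro hN
    have h := hker.sum_mul_pos_s2 θs hPpos hp
    rw [hPN, hN, sum_empty] at h
    exact h.false
  obtain ⟨n, hn, hpn⟩ := hsupp.exists_eq_of_forall_le hN hNpos fun θ => by
    simpa only [hPN] using hmax θ
  rw [← hinj hpn] at hn
  exact lt_asymm (posPart_pos_iff.1 (hPpos p hp)) (negPart_pos_iff.1 (hNpos p hn))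

def ResidualBound (a : (Fin D → ℝ) → H) (θs : Fin k → Fin D → ℝ) (T : Finset (Fin k)) : Prop :=
  ∀ ℓ₀ ∉ T, ∀ v, IsGramSolution (fun j => a (θs j)) T (fun j => ⟪a (θs ℓ₀), a (θs j)⟫_ℝ) v →
    ∑ j ∈ T, v j < 1 ∧ ∀ θ, ∑ j ∈ T, v j * ⟪a θ, a (θs j)⟫_ℝ ≤ ⟪a θ, a (θs ℓ₀)⟫_ℝ

variable {T : Finset (Fin k)}

lemma gramSolution_nonneg (hli : LinearIndependent ℝ fun j => a (θs j))
    (hR : ∀ ℓ ∈ T, ResidualBound a θs (T.erase ℓ)) {τ : Fin D → ℝ} {v : Fin k → ℝ}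
    (hv : IsGramSolution (fun j => a (θs j)) T (fun j => ⟪a τ, a (θs j)⟫_ℝ) v) (ℓ : Fin k)
    (hℓ : ℓ ∈ T) : 0 ≤ v ℓ := by
  obtain ⟨c, hc⟩ := hli.exists_isGramSolution (T.erase ℓ) fun j => ⟪a (θs ℓ), a (θs j)⟫_ℝ
  have hres := (hR ℓ hℓ ℓ (notMem_erase ℓ T) c hc).2 τ
  have hy := hli.sub_sum_smul_ne_zero (notMem_erase ℓ T) c
  refine nonneg_of_mul_nonneg_left ?_ (pow_pos (norm_pos_iff.2 hy) 2)
  rw [hv.mul_norm_sq_eq hℓ hc]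
  exact sub_nonneg.2 hres

lemma gramSolution_sum_lt_one (hker : AdmissibleKernel fun θ θ' => ⟪a θ, a θ'⟫_ℝ)
    (hsupp : AdmissibleSupport (fun θ θ' => ⟪a θ, a θ'⟫_ℝ) θs)
    (hli : LinearIndependent ℝ fun j => a (θs j))
    (hR : ∀ ℓ ∈ T, ResidualBound a θs (T.erase ℓ)) {τ : Fin D → ℝ} (hτ : ∀ ℓ ∈ T, τ ≠ θs ℓ)
    {v : Fin k → ℝ} (hv : IsGramSolution (fun j => a (θs j)) T (fun j => ⟪a τ, a (θs j)⟫_ℝ) v) :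
    ∑ j ∈ T, v j < 1 := by
  rcases T.eq_empty_or_nonempty with rfl | hT
  · simp
  obtain ⟨q, hq⟩ := hli.exists_isGramSolution T fun _ => 1
  have hq_pos : ∀ ℓ ∈ T, 0 < q ℓ := by
    intro ℓ hℓ
    obtain ⟨c, hc⟩ := hli.exists_isGramSolution (T.erase ℓ) fun j => ⟪a (θs ℓ), a (θs j)⟫_ℝ
    have hmass := (hR ℓ hℓ ℓ (notMem_erase ℓ T) c hc).1
    have hy := hli.sub_sum_smul_ne_zero (notMem_erase ℓ T) c
    refine pos_of_mul_pos_left ?_ (pow_pos (norm_pos_iff.2 hy) 2).le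
    rw [hq.mul_norm_sq_eq hℓ hc]
    simpa using hmass
  calc ∑ j ∈ T, v j = ∑ j ∈ T, v j * 1 := by simp
    _ = ∑ j ∈ T, q j * ⟪a τ, a (θs j)⟫_ℝ := hv.sum_mul_comm hq
    _ < 1 := hsupp.sum_mul_lt hker hker.continuous_inner_feature hT hq_pos hq hτ

lemma ResidualBound.of_erase (hker : AdmissibleKernel fun θ θ' => ⟪a θ, a θ'⟫_ℝ)
    (hsupp : AdmissibleSupport (fun θ θ' => ⟪a θ, a θ'⟫_ℝ) θs) (hinj : Function.Injective θs)
    (hli : LinearIndependent ℝ fun j => a (θs j))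
    (hR : ∀ ℓ ∈ T, ResidualBound a θs (T.erase ℓ)) : ResidualBound a θs T := by
  intro ℓ₀ hℓ₀ v hv
  have hsum := gramSolution_sum_lt_one hker hsupp hli hR (fun ℓ hℓ h => hℓ₀ (by rwa [hinj h])) hv
  exact ⟨hsum, hsupp.sum_mul_le hker (gramSolution_nonneg hli hR hv) hsum hℓ₀
    fun ℓ hℓ => ((hv ℓ hℓ).trans (real_inner_comm _ _)).le⟩

lemma residualBound (hker : AdmissibleKernel fun θ θ' => ⟪a θ, a θ'⟫_ℝ)
    (hsupp : AdmissibleSupport (fun θ θ' => ⟪a θ, a θ'⟫_ℝ) θs) (hinj : Function.Injective θs)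
    (hli : LinearIndependent ℝ fun j => a (θs j)) (T : Finset (Fin k)) :
    ResidualBound a θs T := by
  induction T using Finset.strongInduction with
  | H T ih => exact .of_erase hker hsupp hinj hli fun ℓ hℓ => ih _ (erase_ssubset hℓ)

end FeatureKernel

theorem erc_of_admissible_general
    {D k : ℕ} {H : Type*} [NormedAddCommGroup H]
    [InnerProductSpace ℝ H]
    (a : (Fin D → ℝ) → H)
    (κ : (Fin D → ℝ) → (Fin D → ℝ) → ℝ)
    (hκ : ∀ θ θ' : Fin D → ℝ, κ θ θ' = inner ℝ (a θ) (a θ'))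
    (hker : AdmissibleKernel κ)
    (θs : Fin k → (Fin D → ℝ)) (hinj : Function.Injective θs)
    (hsupp : AdmissibleSupport κ θs)
    (G : Matrix (Fin k) (Fin k) ℝ)
    (hG : ∀ ℓ ℓ', G ℓ ℓ' = κ (θs ℓ) (θs ℓ')) :
    IsUnit G.det ∧
    ∀ θ : Fin D → ℝ, (∀ ℓ, θ ≠ θs ℓ) →
      ∑ ℓ, |(G⁻¹.mulVec fun ℓ' => κ θ (θs ℓ')) ℓ| < 1 := by
  obtain rfl : κ = fun θ θ' => ⟪a θ, a θ'⟫_ℝ := funext₂ hκ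
  beta_reduce at hG ⊢
  have hli := hsupp.linearIndependent_feature hker hinj
  have hdet : IsUnit G.det := by
    rw [show G = Matrix.gram ℝ fun j => a (θs j) from Matrix.ext hG]
    exact (Matrix.det_gram_ne_zero_iff_linearIndependent.2 hli).isUnit
  refine ⟨hdet, fun θ hθ => ?_⟩
  set g : Fin k → ℝ := fun j => ⟪a θ, a (θs j)⟫_ℝ
  have hv : IsGramSolution (fun j => a (θs j)) univ g (G⁻¹.mulVec g) := fun ℓ _ => by
    have hGv : G.mulVec (G⁻¹.mulVec g) = g := by
      rw [Matrix.mulVec_mulVec, Matrix.mul_nonsing_inv _ hdet, Matrix.one_mulVec]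
    simpa only [Matrix.mulVec, dotProduct, hG, mul_comm] using congrFun hGv ℓ
  have hR : ∀ ℓ ∈ univ, ResidualBound a θs (univ.erase ℓ) := fun ℓ _ =>
    residualBound hker hsupp hinj hli _
  calc ∑ ℓ, |(G⁻¹.mulVec g) ℓ| = ∑ ℓ, (G⁻¹.mulVec g) ℓ :=
        sum_congr rfl fun ℓ hℓ => abs_of_nonneg (gramSolution_nonneg hli hR hv ℓ hℓ)
    _ < 1 := gramSolution_sum_lt_one hker hsupp hli hR (fun ℓ _ => hθ ℓ) hv

/-- if the kernel is admissible and the support is admissible with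
respect to it, then the Gram matrix is invertible and the exact recovery condition
`‖G⁻¹ g_θ‖₁ < 1` holds for every `θ` outside the support. -/
theorem erc_of_admissible
    {D k : ℕ} (hD : 1 ≤ D) {H : Type*} [NormedAddCommGroup H]
    [InnerProductSpace ℝ H] [CompleteSpace H]
    (a : (Fin D → ℝ) → H)
    (κ : (Fin D → ℝ) → (Fin D → ℝ) → ℝ)
    (hκ : ∀ θ θ' : Fin D → ℝ, κ θ θ' = inner ℝ (a θ) (a θ'))
    (hker : AdmissibleKernel κ)
    (θs : Fin k → (Fin D → ℝ)) (hinj : Function.Injective θs)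
    (hsupp : AdmissibleSupport κ θs)
    (G : Matrix (Fin k) (Fin k) ℝ)
    (hG : ∀ ℓ ℓ', G ℓ ℓ' = κ (θs ℓ) (θs ℓ')) :
    IsUnit G.det ∧
    ∀ θ : Fin D → ℝ, (∀ ℓ, θ ≠ θs ℓ) →
      ∑ ℓ, |(G⁻¹.mulVec fun ℓ' => κ θ (θs ℓ')) ℓ| < 1 :=
  erc_of_admissible_general a κ hκ hker θs hinj hsupp G hG
end

section
/- Let φ : [0,∞) → ℝ be a CMF with φ(0) = 1 and lim_{x→∞} φ(x) = 0, and let 0 < p ≤ 1. Let θ_1,…,θ_t ∈ ℝ be pairwise distinct and let c_1,…,c_t > 0 be positive reals. Define ψ : ℝ → ℝ by ψ(θ) = Σ_{ℓ=1}^t c_ℓ · φ(|θ − θ_ℓ|^p). Then ψ attains its maximum over ℝ, and every global maximizer of ψ belongs to {θ_1,…,θ_t}. -/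
/-- `φ` is a completely monotone function (CMF) on `[0,∞)`: infinitely differentiable
on `(0,∞)`, right-continuous at `0`, with `(-1)^n φ^(n)(x) ≥ 0` for all `x > 0`, `n ∈ ℕ`. -/
def IsCMF (φ : ℝ → ℝ) : Prop :=
  ContDiffOn ℝ (⊤ : ℕ∞) φ (Set.Ioi 0) ∧
  ContinuousWithinAt φ (Set.Ici 0) 0 ∧
  ∀ (n : ℕ) (x : ℝ), 0 < x → 0 ≤ (-1 : ℝ) ^ n * iteratedDeriv n φ x

/-- `‖x‖_p^p = Σ_d |x[d]|^p` on `ℝ^D`. -/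
noncomputable def pPowSum {D : ℕ} (p : ℝ) (x : Fin D → ℝ) : ℝ := ∑ d, |x d| ^ p

open Set Filter

set_option maxHeartbeats 1000000

/-- Three-point convexity: if `a < b < x`, `f a ≤ f b`, then `f b ≤ f x`. -/
lemma my_convexOn_le_right {s : Set ℝ} {f : ℝ → ℝ} {a b x : ℝ} (hf : ConvexOn ℝ s f)
    (ha : a ∈ s) (hx : x ∈ s) (hab : a < b) (hbx : b < x) (hle : f a ≤ f b) : f b ≤ f x := by
  have hax : a < x := hab.trans hbx
  set lam := (x - b) / (x - a) with hlam
  have h1 : 0 < lam := div_pos (by linarith) (by linarith)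
  have h2 : lam < 1 := (div_lt_one (by linarith)).2 (by linarith)
  have hne : x - a ≠ 0 := sub_ne_zero.2 hax.ne'
  have hcomb : lam • a + (1 - lam) • x = b := by
    simp only [smul_eq_mul, hlam]
    field_simp
    ring
  have key := hf.2 ha hx h1.le (by linarith : (0:ℝ) ≤ 1 - lam) (by ring)
  rw [hcomb] at key
  simp only [smul_eq_mul] at key
  nlinarith

/-- Three-point convexity: if `a < b < x`, `f x ≤ f b`, then `f b ≤ f a`. -/
lemma my_convexOn_le_left {s : Set ℝ} {f : ℝ → ℝ} {a b x : ℝ} (hf : ConvexOn ℝ s f)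
    (ha : a ∈ s) (hx : x ∈ s) (hab : a < b) (hbx : b < x) (hle : f x ≤ f b) : f b ≤ f a := by
  have hax : a < x := hab.trans hbx
  set lam := (b - a) / (x - a) with hlam
  have h1 : 0 < lam := div_pos (by linarith) (by linarith)
  have h2 : lam < 1 := (div_lt_one (by linarith)).2 (by linarith)
  have hne : x - a ≠ 0 := sub_ne_zero.2 hax.ne'
  have hcomb : (1 - lam) • a + lam • x = b := by
    simp only [smul_eq_mul, hlam]
    field_simp
    ring
  have key := hf.2 ha hx (by linarith : (0:ℝ) ≤ 1 - lam) h1.le (by ring)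
  rw [hcomb] at key
  simp only [smul_eq_mul] at key
  nlinarith

/-- for a 1-D CMF kernel and positive coefficients, the function
`ψ(θ) = Σ_ℓ c_ℓ φ(|θ-θ_ℓ|^p)` attains its maximum and every global maximizer is one
of the `θ_ℓ`. -/
theorem cmf_1d_positive_combination_maximizers
    (φ : ℝ → ℝ) (hφ : IsCMF φ) (hφ0 : φ 0 = 1)
    (hφtop : Filter.Tendsto φ Filter.atTop (nhds 0))
    (p : ℝ) (hp0 : 0 < p) (hp1 : p ≤ 1)
    (t : ℕ) (ht : 1 ≤ t) (θs : Fin t → ℝ) (hinj : Function.Injective θs)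
    (c : Fin t → ℝ) (hc : ∀ ℓ, 0 < c ℓ) :
    (∃ θm : ℝ, ∀ θ : ℝ,
        (∑ ℓ, c ℓ * φ (|θ - θs ℓ| ^ p)) ≤ ∑ ℓ, c ℓ * φ (|θm - θs ℓ| ^ p)) ∧
    (∀ θm : ℝ,
        (∀ θ : ℝ, (∑ ℓ, c ℓ * φ (|θ - θs ℓ| ^ p)) ≤ ∑ ℓ, c ℓ * φ (|θm - θs ℓ| ^ p)) →
        ∃ ℓ, θm = θs ℓ) := by
  obtain ⟨hsmooth, hcont0, hsign⟩ := hφ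
  set ψ : ℝ → ℝ := fun θ => ∑ ℓ, c ℓ * φ (|θ - θs ℓ| ^ p) with hψdef
  -- basic φ facts
  have hφnonneg : ∀ x : ℝ, 0 ≤ x → 0 ≤ φ x := by
    intro x hx
    rcases eq_or_lt_of_le hx with h | h
    · rw [← h, hφ0]; norm_num
    · simpa using hsign 0 x h
  have hφcont : ContinuousOn φ (Set.Ici 0) := by
    intro x hx
    rcases eq_or_lt_of_le (Set.mem_Ici.1 hx) with h | h
    · rw [← h]; exact hcont0
    · exact (hsmooth.continuousOn.continuousAt (Ioi_mem_nhds h)).continuousWithinAt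
  have hφdiff : DifferentiableOn ℝ φ (Set.Ioi 0) := hsmooth.differentiableOn (by simp)
  have hφdiffAt : ∀ x : ℝ, 0 < x → DifferentiableAt ℝ φ x := fun x hx =>
    hφdiff.differentiableAt (Ioi_mem_nhds hx)
  have hφanti : AntitoneOn φ (Set.Ici 0) := by
    apply antitoneOn_of_deriv_nonpos (convex_Ici 0) hφcont
    · rw [interior_Ici]; exact hφdiff
    · intro x hx
      rw [interior_Ici] at hx
      have := hsign 1 x hx
      rw [iteratedDeriv_one] at this
      nlinarith
  have hsm1 : ContDiffOn ℝ (⊤ : ℕ∞) (deriv φ) (Set.Ioi 0) :=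
    hsmooth.deriv_of_isOpen isOpen_Ioi (by simp)
  have hsm2 : ContDiffOn ℝ (⊤ : ℕ∞) (deriv (deriv φ)) (Set.Ioi 0) :=
    hsm1.deriv_of_isOpen isOpen_Ioi (by simp)
  have hφconv : ConvexOn ℝ (Set.Ici 0) φ := by
    apply convexOn_of_deriv2_nonneg (convex_Ici 0) hφcont
    · rw [interior_Ici]; exact hφdiff
    · rw [interior_Ici]; exact hsm1.differentiableOn (by simp)
    · intro x hx
      rw [interior_Ici] at hx
      have := hsign 2 x hx
      rw [iteratedDeriv_eq_iterate] at this
      nlinarith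
  have hφle1 : ∀ x : ℝ, 0 ≤ x → φ x ≤ 1 := by
    intro x hx
    have := hφanti (Set.self_mem_Ici) (Set.mem_Ici.2 hx) hx
    rwa [hφ0] at this
  -- convexity of h(s) = φ(s^p) on [0,∞)
  have hhconv : ConvexOn ℝ (Set.Ici 0) (fun s : ℝ => φ (s ^ p)) := by
    refine ⟨convex_Ici 0, fun x hx y hy a b ha hb hab => ?_⟩
    simp only [smul_eq_mul]
    have hx0 : (0:ℝ) ≤ x := hx
    have hy0 : (0:ℝ) ≤ y := hy
    have hxp : (0:ℝ) ≤ x ^ p := Real.rpow_nonneg hx0 p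
    have hyp : (0:ℝ) ≤ y ^ p := Real.rpow_nonneg hy0 p
    have hconc := (Real.concaveOn_rpow hp0.le hp1).2 hx hy ha hb hab
    simp only [smul_eq_mul] at hconc
    have hcomb0 : (0:ℝ) ≤ a * x + b * y := by positivity
    have h1 : φ ((a * x + b * y) ^ p) ≤ φ (a * x ^ p + b * y ^ p) :=
      hφanti (Set.mem_Ici.2 (by positivity)) (Set.mem_Ici.2 (Real.rpow_nonneg hcomb0 p)) hconc
    have h2 : φ (a * x ^ p + b * y ^ p) ≤ a * φ (x ^ p) + b * φ (y ^ p) := by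
      have := hφconv.2 (Set.mem_Ici.2 hxp) (Set.mem_Ici.2 hyp) ha hb hab
      simpa using this
    exact h1.trans h2
  -- convexity of θ ↦ φ(|θ-μ|^p) on one-sided sets
  have hgconv : ∀ (μ : ℝ) (S : Set ℝ), Convex ℝ S →
      ((∀ z ∈ S, μ ≤ z) ∨ (∀ z ∈ S, z ≤ μ)) →
      ConvexOn ℝ S (fun θ => φ (|θ - μ| ^ p)) := by
    intro μ S hS hside
    refine ⟨hS, fun x hx y hy a b ha hb hab => ?_⟩
    have hmem : a • x + b • y ∈ S := hS hx hy ha hb hab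
    simp only [smul_eq_mul] at hmem ⊢
    rcases hside with hL | hR
    · have ex : ∀ z, z ∈ S → |z - μ| = z - μ := fun z hz =>
        abs_of_nonneg (by linarith [hL z hz])
      have e1 : |a * x + b * y - μ| = a * (x - μ) + b * (y - μ) := by
        rw [ex _ hmem]; linear_combination μ * hab
      have h := hhconv.2 (Set.mem_Ici.2 (by linarith [hL x hx] : (0:ℝ) ≤ x - μ))
        (Set.mem_Ici.2 (by linarith [hL y hy] : (0:ℝ) ≤ y - μ)) ha hb hab
      simp only [smul_eq_mul] at h
      rw [e1, ex x hx, ex y hy]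
      exact h
    · have ex : ∀ z, z ∈ S → |z - μ| = μ - z := fun z hz => by
        rw [abs_sub_comm]; exact abs_of_nonneg (by linarith [hR z hz])
      have e1 : |a * x + b * y - μ| = a * (μ - x) + b * (μ - y) := by
        rw [ex _ hmem]; linear_combination (-μ) * hab
      have h := hhconv.2 (Set.mem_Ici.2 (by linarith [hR x hx] : (0:ℝ) ≤ μ - x))
        (Set.mem_Ici.2 (by linarith [hR y hy] : (0:ℝ) ≤ μ - y)) ha hb hab
      simp only [smul_eq_mul] at h
      rw [e1, ex x hx, ex y hy]
      exact h
  -- convexity of partial sums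
  have hsumconv : ∀ (T : Finset (Fin t)) (S : Set ℝ), Convex ℝ S →
      (∀ ℓ ∈ T, (∀ z ∈ S, θs ℓ ≤ z) ∨ (∀ z ∈ S, z ≤ θs ℓ)) →
      ConvexOn ℝ S (fun θ => ∑ ℓ ∈ T, c ℓ * φ (|θ - θs ℓ| ^ p)) := by
    intro T S hS hside
    refine ⟨hS, fun x hx y hy a b ha hb hab => ?_⟩
    simp only [smul_eq_mul, Finset.mul_sum, ← Finset.sum_add_distrib]
    apply Finset.sum_le_sum
    intro ℓ hℓ
    have h := (hgconv (θs ℓ) S hS (hside ℓ hℓ)).2 hx hy ha hb hab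
    simp only [smul_eq_mul] at h
    nlinarith [(hc ℓ).le, mul_le_mul_of_nonneg_left h (hc ℓ).le]
  -- continuity
  have hgc : ∀ μ : ℝ, Continuous (fun θ : ℝ => φ (|θ - μ| ^ p)) := by
    intro μ
    have h1 : Continuous fun θ : ℝ => |θ - μ| := (continuous_id.sub continuous_const).abs
    have h2 : Continuous fun θ : ℝ => |θ - μ| ^ p :=
      h1.rpow_const fun θ => Or.inr hp0.le
    exact hφcont.comp_continuous h2 fun θ => Set.mem_Ici.2 (Real.rpow_nonneg (abs_nonneg _) p)
  have hψcont : Continuous ψ := by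
    apply continuous_finset_sum
    intro ℓ _
    exact continuous_const.mul (hgc (θs ℓ))
  -- tendsto at infinity
  have hterm_top : ∀ μ : ℝ, Tendsto (fun θ : ℝ => |θ - μ| ^ p) atTop atTop := by
    intro μ
    apply (tendsto_rpow_atTop hp0).comp
    apply tendsto_atTop_mono (f := fun θ : ℝ => θ + -μ)
    · intro θ; rw [← sub_eq_add_neg]; exact le_abs_self _
    · exact tendsto_atTop_add_const_right _ (-μ) tendsto_id
  have hterm_bot : ∀ μ : ℝ, Tendsto (fun θ : ℝ => |θ - μ| ^ p) atBot atTop := by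
    intro μ
    apply (tendsto_rpow_atTop hp0).comp
    apply tendsto_atTop_mono (f := fun θ : ℝ => -θ + μ)
    · intro θ
      have := neg_le_abs (θ - μ)
      linarith
    · exact tendsto_atTop_add_const_right _ μ tendsto_neg_atBot_atTop
  have hψtop : Tendsto ψ atTop (nhds 0) := by
    have h : Tendsto ψ atTop (nhds (∑ ℓ : Fin t, c ℓ * 0)) := by
      apply tendsto_finset_sum
      intro ℓ _
      exact (hφtop.comp (hterm_top (θs ℓ))).const_mul (c ℓ)
    simpa using h
  have hψbot : Tendsto ψ atBot (nhds 0) := by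
    have h : Tendsto ψ atBot (nhds (∑ ℓ : Fin t, c ℓ * 0)) := by
      apply tendsto_finset_sum
      intro ℓ _
      exact (hφtop.comp (hterm_bot (θs ℓ))).const_mul (c ℓ)
    simpa using h
  -- value at knots
  have hψat : ∀ j, c j ≤ ψ (θs j) := by
    intro j
    have h0 : c j * φ (|θs j - θs j| ^ p) = c j := by
      simp [Real.zero_rpow hp0.ne', hφ0]
    calc c j = c j * φ (|θs j - θs j| ^ p) := h0.symm
      _ ≤ ∑ ℓ, c ℓ * φ (|θs j - θs ℓ| ^ p) := by
          apply Finset.single_le_sum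
            (f := fun ℓ => c ℓ * φ (|θs j - θs ℓ| ^ p))
          · intro ℓ _
            exact mul_nonneg (hc ℓ).le (hφnonneg _ (Real.rpow_nonneg (abs_nonneg _) p))
          · exact Finset.mem_univ j
  set j0 : Fin t := ⟨0, ht⟩
  constructor
  · -- existence of maximizer
    have hε : 0 < c j0 := hc j0
    obtain ⟨Rt, hRt⟩ := Filter.eventually_atTop.1 (hψtop.eventually_lt_const hε)
    obtain ⟨Rb, hRb⟩ := Filter.eventually_atBot.1 (hψbot.eventually_lt_const hε)
    set A := min Rb (θs j0) with hA
    set B := max Rt (θs j0) with hB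
    have hj0mem : θs j0 ∈ Set.Icc A B :=
      ⟨min_le_right _ _, le_max_right _ _⟩
    obtain ⟨θm, hθmem, hθmax⟩ := (isCompact_Icc (a := A) (b := B)).exists_isMaxOn
      ⟨θs j0, hj0mem⟩ hψcont.continuousOn
    refine ⟨θm, fun θ => ?_⟩
    have h2 : c j0 ≤ ψ (θs j0) := hψat j0
    have h3 : ψ (θs j0) ≤ ψ θm := isMaxOn_iff.1 hθmax _ hj0mem
    rcases lt_or_ge θ A with hlt | hge
    · have h1 : ψ θ < c j0 :=
        hRb θ (le_of_lt (lt_of_lt_of_le hlt (min_le_left _ _)))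
      linarith
    rcases le_or_gt θ B with hle | hgt
    · exact isMaxOn_iff.1 hθmax θ ⟨hge, hle⟩
    · have h1 : ψ θ < c j0 :=
        hRt θ (le_of_lt (lt_of_le_of_lt (le_max_left _ _) hgt))
      linarith
  · -- every maximizer is a knot
    intro θm hmax
    by_contra hno
    push_neg at hno
    set M := ψ θm with hM
    have hMpos : 0 < M := lt_of_lt_of_le (hc j0) ((hψat j0).trans (hmax (θs j0)))
    have hfar_top : ∀ b : ℝ, ∃ x, b < x ∧ ψ x < M := by
      intro b
      obtain ⟨R, hR⟩ := Filter.eventually_atTop.1 (hψtop.eventually_lt_const hMpos)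
      exact ⟨max R b + 1, by simp [lt_of_le_of_lt (le_max_right R b) (lt_add_one _)],
        hR _ (by simp [le_of_lt (lt_of_le_of_lt (le_max_left R b) (lt_add_one _))])⟩
    have hfar_bot : ∀ b : ℝ, ∃ x, x < b ∧ ψ x < M := by
      intro b
      obtain ⟨R, hR⟩ := Filter.eventually_atBot.1 (hψbot.eventually_lt_const hMpos)
      exact ⟨min R b - 1, by simp [lt_of_lt_of_le (sub_one_lt _) (min_le_right R b)],
        hR _ (by simp [le_of_lt (lt_of_lt_of_le (sub_one_lt _) (min_le_left R b))])⟩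
    by_cases hall : ∀ ℓ, θs ℓ < θm
    · -- θm to the right of all knots
      obtain ⟨ja, _, hjamax⟩ := Finset.exists_max_image Finset.univ θs ⟨j0, Finset.mem_univ j0⟩
      have hAconv : ConvexOn ℝ (Set.Ici (θs ja)) ψ := by
        apply hsumconv Finset.univ _ (convex_Ici _)
        intro ℓ _
        exact Or.inl fun z hz => le_trans (hjamax ℓ (Finset.mem_univ ℓ)) hz
      obtain ⟨x, hx1, hx2⟩ := hfar_top θm
      have := my_convexOn_le_right hAconv (Set.self_mem_Ici)
        (Set.mem_Ici.2 (le_of_lt ((hall ja).trans hx1))) (hall ja) hx1 (hmax (θs ja))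
      exact absurd this (not_le.2 hx2)
    push_neg at hall
    obtain ⟨ℓb, hℓb'⟩ := hall
    have hℓb : θm < θs ℓb := lt_of_le_of_ne hℓb' (hno ℓb)
    by_cases hall2 : ∀ ℓ, θm < θs ℓ
    · -- θm to the left of all knots
      obtain ⟨jb, _, hjbmin⟩ := Finset.exists_min_image Finset.univ θs ⟨j0, Finset.mem_univ j0⟩
      have hAconv : ConvexOn ℝ (Set.Iic (θs jb)) ψ := by
        apply hsumconv Finset.univ _ (convex_Iic _)
        intro ℓ _
        exact Or.inr fun z hz => le_trans hz (hjbmin ℓ (Finset.mem_univ ℓ))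
      obtain ⟨x, hx1, hx2⟩ := hfar_bot θm
      have := my_convexOn_le_left hAconv
        (Set.mem_Iic.2 (le_of_lt (hx1.trans (hall2 jb)))) (Set.self_mem_Iic)
        hx1 (hall2 jb) (hmax (θs jb))
      exact absurd this (not_le.2 hx2)
    push_neg at hall2
    obtain ⟨ℓa, hℓa'⟩ := hall2
    have hℓa : θs ℓa < θm := lt_of_le_of_ne hℓa' (fun h => hno ℓa h.symm)
    -- θm strictly between knots
    obtain ⟨ja, hjaS, hjamax⟩ := Finset.exists_max_image
      (Finset.univ.filter fun ℓ => θs ℓ < θm) θs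
      ⟨ℓa, Finset.mem_filter.2 ⟨Finset.mem_univ _, hℓa⟩⟩
    obtain ⟨jb, hjbS, hjbmin⟩ := Finset.exists_min_image
      (Finset.univ.filter fun ℓ => θm < θs ℓ) θs
      ⟨ℓb, Finset.mem_filter.2 ⟨Finset.mem_univ _, hℓb⟩⟩
    set A := θs ja with hAdef
    set B := θs jb with hBdef
    have hAm : A < θm := (Finset.mem_filter.1 hjaS).2
    have hBm : θm < B := (Finset.mem_filter.1 hjbS).2
    have hsides : ∀ ℓ ∈ Finset.univ, (∀ z ∈ Set.Icc A B, θs ℓ ≤ z) ∨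
        (∀ z ∈ Set.Icc A B, z ≤ θs ℓ) := by
      intro ℓ _
      rcases lt_or_gt_of_ne (fun h => hno ℓ h.symm : θs ℓ ≠ θm) with h | h
      · exact Or.inl fun z hz =>
          le_trans (hjamax ℓ (Finset.mem_filter.2 ⟨Finset.mem_univ _, h⟩)) hz.1
      · exact Or.inr fun z hz =>
          le_trans hz.2 (hjbmin ℓ (Finset.mem_filter.2 ⟨Finset.mem_univ _, h⟩))
    have hconvI : ConvexOn ℝ (Set.Icc A B) ψ :=
      hsumconv Finset.univ _ (convex_Icc _ _) hsides
    have hmemA : A ∈ Set.Icc A B := ⟨le_refl _, le_of_lt (hAm.trans hBm)⟩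
    have hmemB : B ∈ Set.Icc A B := ⟨le_of_lt (hAm.trans hBm), le_refl _⟩
    have hmemθm : θm ∈ Set.Icc A B := ⟨hAm.le, hBm.le⟩
    -- plateau on [A, θm]
    have hplateau : ∀ y, y ∈ Set.Icc A θm → ψ y = M := by
      intro y hy
      rcases eq_or_lt_of_le hy.2 with h | h
      · rw [h]
      · have hyI : y ∈ Set.Icc A B := ⟨hy.1, le_of_lt (lt_of_lt_of_le h hBm.le)⟩
        have hge := my_convexOn_le_left hconvI hyI hmemB h hBm (hmax B)
        exact le_antisymm (hmax y) hge
    set L := θm - A with hLdef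
    have hLpos : 0 < L := by simp only [hLdef]; linarith
    set v := φ (L ^ p) with hvdef
    -- affine interpolation identity
    have hkey : ∀ s : ℝ, s ∈ Set.Icc 0 L → φ (s ^ p) = 1 - s / L + s / L * v := by
      intro s hs
      set lam := s / L with hlamdef
      have hlam0 : 0 ≤ lam := div_nonneg hs.1 hLpos.le
      have hlam1 : lam ≤ 1 := (div_le_one hLpos).2 hs.2
      have hθeq : (1 - lam) * A + lam * θm = A + s := by
        have : lam * L = s := by
          rw [hlamdef]; field_simp
        nlinarith [this]
      have hθI : A + s ∈ Set.Icc A B :=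
        ⟨by linarith [hs.1], by linarith [hs.2, hBm.le]⟩
      have hθIm : A + s ∈ Set.Icc A θm := ⟨by linarith [hs.1], by linarith [hs.2]⟩
      -- absolute values
      have habs1 : |A + s - A| = s := by rw [add_sub_cancel_left]; exact abs_of_nonneg hs.1
      have habs2 : |A - A| = 0 := by simp
      have habs3 : |θm - A| = L := by rw [← hLdef]; exact abs_of_pos hLpos
      -- convex side for the ja term
      have hja_side : (∀ z ∈ Set.Icc A B, θs ja ≤ z) ∨ (∀ z ∈ Set.Icc A B, z ≤ θs ja) :=
        Or.inl fun z hz => hz.1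
      have hgj := hgconv (θs ja) (Set.Icc A B) (convex_Icc _ _) hja_side
      have hup := hgj.2 hmemA hmemθm (by linarith : (0:ℝ) ≤ 1 - lam) hlam0 (by ring)
      simp only [smul_eq_mul] at hup
      rw [hθeq] at hup
      rw [← hAdef] at hup
      rw [habs1, habs2, habs3] at hup
      -- concave side via plateau
      set F : ℝ → ℝ := fun θ => ∑ ℓ ∈ Finset.univ.erase ja, c ℓ * φ (|θ - θs ℓ| ^ p)
        with hFdef
      have hsplit : ∀ θ, ψ θ = c ja * φ (|θ - θs ja| ^ p) + F θ := by
        intro θ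
        rw [hψdef, hFdef]
        exact (Finset.add_sum_erase _ _ (Finset.mem_univ ja)).symm
      have hFconv : ConvexOn ℝ (Set.Icc A B) F :=
        hsumconv _ _ (convex_Icc _ _) (fun ℓ _ => hsides ℓ (Finset.mem_univ ℓ))
      have hdn := hFconv.2 hmemA hmemθm (by linarith : (0:ℝ) ≤ 1 - lam) hlam0 (by ring)
      simp only [smul_eq_mul] at hdn
      rw [hθeq] at hdn
      -- plateau values
      have hA0 : ψ A = M := hplateau A ⟨le_refl _, hAm.le⟩
      have hθ0 : ψ (A + s) = M := hplateau _ hθIm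
      have hm0 : ψ θm = M := rfl
      have e1 : c ja * φ (|A + s - θs ja| ^ p) = M - F (A + s) := by
        have := hsplit (A + s); linarith
      have e2 : c ja * φ (|A - θs ja| ^ p) = M - F A := by
        have := hsplit A; linarith
      have e3 : c ja * φ (|θm - θs ja| ^ p) = M - F θm := by
        have := hsplit θm; linarith
      rw [← hAdef] at e1 e2 e3
      rw [habs1] at e1
      rw [habs2] at e2
      rw [habs3] at e3
      -- combine
      have hlow : (1 - lam) * (c ja * φ ((0:ℝ) ^ p)) + lam * (c ja * φ (L ^ p))
          ≤ c ja * φ (s ^ p) := by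
        rw [e1, e2, e3]
        linarith [hdn]
      have hupc : c ja * φ (s ^ p) ≤
          (1 - lam) * (c ja * φ ((0:ℝ) ^ p)) + lam * (c ja * φ (L ^ p)) := by
        have := mul_le_mul_of_nonneg_left hup (hc ja).le
        linarith [this]
      have heq : c ja * φ (s ^ p) =
          (1 - lam) * (c ja * φ ((0:ℝ) ^ p)) + lam * (c ja * φ (L ^ p)) :=
        le_antisymm hupc hlow
      have hz : ((0:ℝ) ^ p : ℝ) = 0 := Real.zero_rpow hp0.ne'
      rw [hz, hφ0, ← hvdef] at heq
      have hcja : c ja ≠ 0 := (hc ja).ne'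
      have : φ (s ^ p) = (1 - lam) * 1 + lam * v := by
        apply mul_left_cancel₀ hcja
        rw [heq]; ring
      rw [this]; ring
    -- v ≤ 1
    have hvle1 : v ≤ 1 := hφle1 _ (Real.rpow_nonneg hLpos.le p)
    rcases eq_or_lt_of_le hvle1 with hveq | hvlt
    · -- v = 1 : φ equals 1 at two points, contradiction with decay
      have ha1 : φ ((L / 2) ^ p) = 1 := by
        have h := hkey (L / 2) ⟨by linarith, by linarith⟩
        rw [hveq] at h
        rw [h]; ring
      have hb1 : φ (L ^ p) = 1 := by rw [← hvdef]; exact hveq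
      have hlt : (L / 2) ^ p < L ^ p := Real.rpow_lt_rpow (by positivity) (by linarith) hp0
      obtain ⟨x, hx1, hx2⟩ : ∃ x, L ^ p < x ∧ φ x < 1 := by
        obtain ⟨R, hR⟩ := Filter.eventually_atTop.1 (hφtop.eventually_lt_const one_pos)
        refine ⟨max R (L ^ p) + 1, ?_, hR _ ?_⟩
        · exact lt_of_le_of_lt (le_max_right _ _) (lt_add_one _)
        · exact le_of_lt (lt_of_le_of_lt (le_max_left _ _) (lt_add_one _))
      have hfin := my_convexOn_le_right hφconv
        (Set.mem_Ici.2 (Real.rpow_nonneg (by linarith : (0:ℝ) ≤ L / 2) p))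
        (Set.mem_Ici.2 (le_trans (Real.rpow_nonneg hLpos.le p) hx1.le))
        hlt hx1 (le_of_eq (ha1.trans hb1.symm))
      rw [hb1] at hfin
      linarith
    · rcases lt_or_eq_of_le hp1 with hplt | hpeq
      · -- p < 1 : strict concavity violation at midpoint
        set r := (2:ℝ)⁻¹ ^ (1 / p) with hrdef
        have hrpos : 0 < r := Real.rpow_pos_of_pos (by norm_num) _
        have h1p : 1 < 1 / p := by
          rw [lt_div_iff₀ hp0]; linarith
        have hrlt : r < 1 / 2 := by
          have := Real.rpow_lt_rpow_of_exponent_gt (x := (2:ℝ)⁻¹) (by norm_num) (by norm_num) h1p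
          rw [Real.rpow_one] at this
          rw [hrdef]
          linarith [this]
        have hrle1 : r ≤ 1 := by linarith
        set s2 := L * r with hs2def
        have hs2mem : s2 ∈ Set.Icc 0 L := by
          constructor
          · rw [hs2def]; exact mul_nonneg hLpos.le hrpos.le
          · rw [hs2def]; nlinarith
        have hs2p : s2 ^ p = L ^ p / 2 := by
          rw [hs2def, Real.mul_rpow hLpos.le hrpos.le, hrdef,
            ← Real.rpow_mul (by norm_num : (0:ℝ) ≤ 2⁻¹),
            one_div_mul_cancel hp0.ne', Real.rpow_one]
          ring
        have hmid := hφconv.2 (Set.mem_Ici.2 (le_refl (0:ℝ)))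
          (Set.mem_Ici.2 (Real.rpow_nonneg hLpos.le p))
          (by norm_num : (0:ℝ) ≤ 1/2) (by norm_num : (0:ℝ) ≤ 1/2) (by norm_num)
        simp only [smul_eq_mul] at hmid
        have hmidarg : (1/2 : ℝ) * 0 + (1/2 : ℝ) * L ^ p = L ^ p / 2 := by ring
        rw [hmidarg, hφ0, ← hvdef] at hmid
        have hk2 := hkey s2 hs2mem
        rw [hs2p] at hk2
        have hs2L : s2 / L = r := by
          rw [hs2def]; field_simp
        rw [hs2L] at hk2
        -- hk2 : φ (L^p/2) = 1 - r + r * v ; hmid : φ (L^p/2) ≤ 1/2 * 1 + 1/2 * v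
        linarith [mul_pos (sub_pos.2 hrlt) (sub_pos.2 hvlt), hk2, hmid]
      · -- p = 1 : derivative argument
        subst hpeq
        have hkey1 : ∀ s : ℝ, s ∈ Set.Icc 0 L → φ s = 1 - s / L + s / L * v := by
          intro s hs
          have := hkey s hs
          rwa [Real.rpow_one] at this
        set k' := (v - 1) / L with hk'def
        have hk'neg : k' < 0 := div_neg_of_neg_of_pos (by linarith) hLpos
        have hderiv : ∀ x, x ∈ Set.Ioo 0 L → deriv φ x = k' := by
          intro x hx
          have heq : φ =ᶠ[nhds x] fun s => 1 + k' * s := by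
            filter_upwards [Ioo_mem_nhds hx.1 hx.2] with y hy
            rw [hkey1 y ⟨hy.1.le, hy.2.le⟩, hk'def]
            field_simp
            ring
          rw [heq.deriv_eq]
          have hd : HasDerivAt (fun s : ℝ => 1 + k' * s) k' x := by
            simpa using ((hasDerivAt_id x).const_mul k').const_add 1
          exact hd.deriv
        -- -φ' is convex on (0,∞)
        have hdneg : (deriv fun y => -deriv φ y) = fun y => -deriv (deriv φ) y :=
          funext fun y => deriv.neg
        have hnegconv : ConvexOn ℝ (Set.Ioi 0) fun x => -deriv φ x := by
          apply convexOn_of_deriv2_nonneg (convex_Ioi 0)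
          · exact hsm1.continuousOn.neg
          · rw [interior_Ioi]
            exact (hsm1.differentiableOn (by simp)).neg
          · rw [interior_Ioi, hdneg]
            exact (hsm2.differentiableOn (by simp)).neg
          · intro x hx
            rw [interior_Ioi] at hx
            have h3 := hsign 3 x hx
            rw [iteratedDeriv_eq_iterate] at h3
            have e : deriv^[2] (fun y => -deriv φ y) x = -deriv^[3] φ x := by
              have e1 : deriv^[2] (fun y => -deriv φ y) = deriv (deriv fun y => -deriv φ y) := by
                rfl
              rw [e1, hdneg]
              have e2 : (deriv fun y => -deriv (deriv φ) y) = fun y => -deriv (deriv (deriv φ)) y :=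
                funext fun y => deriv.neg
              rw [e2]
              rfl
            rw [e]
            nlinarith
        -- -φ' ≥ -k' beyond L/2
        have hge : ∀ x : ℝ, L / 2 < x → deriv φ x ≤ k' := by
          intro x hx
          have hd1 : deriv φ (L/4) = k' := hderiv _ ⟨by linarith, by linarith⟩
          have hd2 : deriv φ (L/2) = k' := hderiv _ ⟨by linarith, by linarith⟩
          have h := my_convexOn_le_right hnegconv
            (Set.mem_Ioi.2 (by linarith : (0:ℝ) < L/4))
            (Set.mem_Ioi.2 (by linarith : (0:ℝ) < x))
            (by linarith : L/4 < L/2) hx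
            (by rw [hd1, hd2])
          rw [hd2] at h
          linarith
        -- φ decreases at linear rate beyond L/2
        have hanti2 : AntitoneOn (fun x => φ x - k' * x) (Set.Ici (L/2)) := by
          apply antitoneOn_of_deriv_nonpos (convex_Ici _)
          · apply ContinuousOn.sub
            · exact hφcont.mono (Set.Ici_subset_Ici.2 (by linarith))
            · exact (continuous_const.mul continuous_id).continuousOn
          · rw [interior_Ici]
            intro x hx
            have hx0 : (0:ℝ) < x := lt_trans (by linarith) hx
            exact ((hφdiffAt x hx0).sub ((differentiable_id.const_mul k') x)).differentiableWithinAt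
          · intro x hx
            rw [interior_Ici] at hx
            have hx0 : (0:ℝ) < x := lt_trans (by linarith) hx
            have hd : HasDerivAt (fun y => φ y - k' * y) (deriv φ x - k' * 1) x :=
              (hφdiffAt x hx0).hasDerivAt.sub ((hasDerivAt_id x).const_mul k')
            rw [hd.deriv]
            linarith [hge x hx]
        set d := (φ L + 1) / (-k') with hddef
        have hdpos : 0 < d := div_pos (by linarith [hφnonneg L hLpos.le]) (by linarith)
        have hkd : k' * d = -(φ L + 1) := by
          rw [hddef, mul_div_assoc']
          rw [div_eq_iff (by linarith : -k' ≠ 0)]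
          ring
        have hstep : φ (L + d) - k' * (L + d) ≤ φ L - k' * L :=
          hanti2 (Set.mem_Ici.2 (by linarith : L/2 ≤ L))
            (Set.mem_Ici.2 (by linarith : L/2 ≤ L + d)) (by linarith : L ≤ L + d)
        have hφx2 : 0 ≤ φ (L + d) := hφnonneg _ (by linarith)
        nlinarith [hstep, hkd, hφx2]
end

section
/- Let φ : [0,∞) → ℝ be a CMF with φ(0) = 1 and lim_{x→∞} φ(x) = 0, and assume φ is right-differentiable at 0. Then the right derivative satisfies φ'(0⁺) < 0, and for every integer k ≥ 3 there exists x₀ > 0 such that for all x with 0 < x < x₀ one has (k−1)·φ(2x) − k·φ(x) + 1 < 0. -/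
private lemma cmf_convexOn (φ : ℝ → ℝ) (hφ : IsCMF φ) : ConvexOn ℝ (Set.Ici 0) φ := by
  obtain ⟨hsm, hc, hsign⟩ := hφ
  have hIoi : IsOpen (Set.Ioi (0:ℝ)) := isOpen_Ioi
  have hint : interior (Set.Ici (0:ℝ)) = Set.Ioi 0 := interior_Ici
  have hcont : ContinuousOn φ (Set.Ici 0) := by
    intro x hx
    rcases eq_or_lt_of_le (Set.mem_Ici.1 hx) with h | h
    · exact h ▸ hc
    · exact (hsm.continuousOn x h).mono_of_mem_nhdsWithin
        (mem_nhdsWithin_of_mem_nhds (hIoi.mem_nhds h))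
  have hderiv : ContDiffOn ℝ (⊤ : ℕ∞) (deriv φ) (Set.Ioi 0) :=
    hsm.deriv_of_isOpen hIoi (by exact (by simp))
  refine convexOn_of_deriv2_nonneg (convex_Ici 0) hcont ?_ ?_ ?_
  · rw [hint]; exact hsm.differentiableOn (by simp)
  · rw [hint]; exact hderiv.differentiableOn (by simp)
  · intro x hx
    rw [hint] at hx
    have h2 : deriv^[2] φ = deriv (deriv φ) := rfl
    rw [h2]
    have := hsign 2 x hx
    rw [iteratedDeriv_succ, iteratedDeriv_one] at this
    simpa using this

/-- if a CMF `φ` with `φ(0)=1` and `φ(x)→0` is right-differentiable at `0`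
with right derivative `d`, then `d < 0`, and for every `k ≥ 3` there is `x₀ > 0` such
that `(k-1)φ(2x) - kφ(x) + 1 < 0` for all `0 < x < x₀`. -/
theorem cmf_right_derivative_negative_and_separation
    (φ : ℝ → ℝ) (hφ : IsCMF φ) (hφ0 : φ 0 = 1)
    (hφtop : Filter.Tendsto φ Filter.atTop (nhds 0))
    (d : ℝ) (hd : HasDerivWithinAt φ d (Set.Ici 0) 0) :
    d < 0 ∧
    ∀ k : ℕ, 3 ≤ k → ∃ x₀ : ℝ, 0 < x₀ ∧ ∀ x : ℝ, 0 < x → x < x₀ →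
      ((k : ℝ) - 1) * φ (2 * x) - (k : ℝ) * φ x + 1 < 0 := by
  have hconv := cmf_convexOn φ hφ
  -- slope tendsto for φ
  have hslope : Filter.Tendsto (slope φ 0) (nhdsWithin 0 (Set.Ioi 0)) (nhds d) := by
    have := hasDerivWithinAt_iff_tendsto_slope.1 hd
    rwa [Set.Ici_sdiff_left] at this
  -- d ≤ slope φ 0 y for any y > 0
  have hdle : ∀ y : ℝ, 0 < y → d ≤ (φ y - 1) / y := by
    intro y hy
    have hev : ∀ᶠ x in nhdsWithin (0:ℝ) (Set.Ioi 0), slope φ 0 x ≤ (φ y - 1) / y := by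
      filter_upwards [Ioo_mem_nhdsGT_of_mem (Set.mem_Ico.2 ⟨le_rfl, hy⟩)] with x hx
      have h := hconv.secant_mono (Set.self_mem_Ici) (Set.Ioi_subset_Ici le_rfl hx.1)
        (Set.Ioi_subset_Ici le_rfl hy) (ne_of_gt hx.1) (ne_of_gt hy) (le_of_lt hx.2)
      simp only [hφ0, sub_zero] at h
      simp only [slope_def_field, hφ0, sub_zero]
      exact h
    exact le_of_tendsto hslope hev
  have hdneg : d < 0 := by
    by_contra h
    push_neg at h
    -- then φ y ≥ 1 for all y > 0, contradicting tendsto 0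
    have h1 : ∀ y : ℝ, 0 < y → (1:ℝ) ≤ φ y := by
      intro y hy
      have := hdle y hy
      have : 0 ≤ (φ y - 1) / y := le_trans h this
      rcases div_nonneg_iff.1 this with ⟨h1, _⟩ | ⟨_, h2⟩
      · linarith
      · linarith
    have := hφtop.eventually (eventually_lt_nhds (show (0:ℝ) < 1 by norm_num))
    obtain ⟨N, hN⟩ := (this.and (Filter.eventually_ge_atTop (1:ℝ))).exists
    exact absurd (h1 N (lt_of_lt_of_le one_pos hN.2)) (not_le.2 hN.1)
  refine ⟨hdneg, fun k hk => ?_⟩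
  -- g x = (k-1) φ(2x) - k φ x + 1 has right derivative (k-2) d < 0 at 0, g 0 = 0
  set g : ℝ → ℝ := fun x => ((k:ℝ) - 1) * φ (2 * x) - (k:ℝ) * φ x + 1 with hg
  have h2x : HasDerivWithinAt (fun x : ℝ => φ (2 * x)) (d * 2) (Set.Ici 0) 0 := by
    have hlin : HasDerivWithinAt (fun x : ℝ => 2 * x) 2 (Set.Ici 0) (0:ℝ) := by
      simpa using ((hasDerivWithinAt_id (0:ℝ) (Set.Ici 0)).const_mul (2:ℝ))
    have hmaps : Set.MapsTo (fun x : ℝ => 2 * x) (Set.Ici 0) (Set.Ici 0) := by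
      intro x hx
      simp only [Set.mem_Ici] at *
      linarith
    have hd' : HasDerivWithinAt φ d (Set.Ici 0) ((fun x : ℝ => 2 * x) 0) := by simpa using hd
    exact HasDerivWithinAt.comp (0:ℝ) hd' hlin hmaps
  have hgd : HasDerivWithinAt g (((k:ℝ) - 1) * (d * 2) - (k:ℝ) * d) (Set.Ici 0) 0 :=
    ((h2x.const_mul ((k:ℝ) - 1)).sub (hd.const_mul (k:ℝ))).add_const 1
  have hg0 : g 0 = 0 := by simp [hg, hφ0]
  have hD : ((k:ℝ) - 1) * (d * 2) - (k:ℝ) * d < 0 := by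
    have hk3 : (3:ℝ) ≤ (k:ℝ) := by exact_mod_cast hk
    nlinarith
  have hgs : Filter.Tendsto (slope g 0) (nhdsWithin 0 (Set.Ioi 0))
      (nhds (((k:ℝ) - 1) * (d * 2) - (k:ℝ) * d)) := by
    have := hasDerivWithinAt_iff_tendsto_slope.1 hgd
    rwa [Set.Ici_sdiff_left] at this
  have hev : ∀ᶠ x in nhdsWithin (0:ℝ) (Set.Ioi 0), slope g 0 x < 0 :=
    hgs.eventually (eventually_lt_nhds hD)
  rw [eventually_nhdsWithin_iff, Metric.eventually_nhds_iff] at hev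
  obtain ⟨ε, hε, hεh⟩ := hev
  refine ⟨ε, hε, fun x hx hxε => ?_⟩
  have hx0 : dist x 0 < ε := by
    rw [Real.dist_eq, sub_zero, abs_of_pos hx]; exact hxε
  have hs := hεh hx0 hx
  rw [slope_def_field, hg0] at hs
  have : g x < 0 := by
    have hxne : x ≠ 0 := ne_of_gt hx
    have := hs
    rw [sub_zero, sub_zero, div_neg_iff] at this
    rcases this with ⟨h1, h2⟩ | ⟨h1, h2⟩
    · linarith
    · exact h1
  simpa [hg] using this
end

section
/- Let D ≥ 1, let H be a real Hilbert space, and let a : ℝ^D → H be a CMF dictionary in dimension D with induced kernel κ. Let S* ⊂ ℝ^D be a finite set of pairwise distinct points and suppose the Cartesian grid ⊠(S*) is axis admissible with respect to κ. Then for every nonzero r in the linear span of {a(θ) : θ ∈ ⊠(S*)} and every θ ∈ ℝ^D \ ⊠(S*), one has |⟨a(θ), r⟩| < max_{θ' ∈ ⊠(S*)} |⟨a(θ'), r⟩|; in particular the set of global maximizers over ℝ^D of θ ↦ |⟨a(θ), r⟩| is nonempty and contained in ⊠(S*). -/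
/-- The smallest Cartesian grid `⊠(S)` containing the finite family
`θs : Fin k → ℝ^D`, as a `Finset` of `ℝ^D`. -/
noncomputable def SetAug {D k : ℕ} (θs : Fin k → (Fin D → ℝ)) :
    Finset (Fin D → ℝ) :=
  Fintype.piFinset fun d => Finset.image (fun ℓ => θs ℓ d) Finset.univ

/-- Axis admissibility of the Cartesian grid `Π_d S_d` with respect to the kernel
`κ`: for every axis `d`, every point `θ` with `θ[d] = 0`, and all coefficients
indexed by the grid points, if `f_d(t) = |Σ_{θ' ∈ grid} c(θ') κ(θ + t e_d, θ')|` is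
not identically zero then `f_d` attains its maximum and every global maximizer of
`f_d` lies in `S_d`. -/
def AxisAdmissible {D : ℕ} (Sd : Fin D → Finset ℝ)
    (κ : (Fin D → ℝ) → (Fin D → ℝ) → ℝ) : Prop :=
  ∀ (d : Fin D) (θ : Fin D → ℝ), θ d = 0 →
    ∀ c : (Fin D → ℝ) → ℝ,
      (¬ ∀ t : ℝ,
        |∑ θ' ∈ Fintype.piFinset Sd, c θ' * κ (θ + t • (Pi.single d 1 : Fin D → ℝ)) θ'| = 0) →
      (∃ t : ℝ, ∀ s : ℝ,
        |∑ θ' ∈ Fintype.piFinset Sd, c θ' * κ (θ + s • (Pi.single d 1 : Fin D → ℝ)) θ'| ≤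
          |∑ θ' ∈ Fintype.piFinset Sd, c θ' * κ (θ + t • (Pi.single d 1 : Fin D → ℝ)) θ'|) ∧
      (∀ t : ℝ, (∀ s : ℝ,
        |∑ θ' ∈ Fintype.piFinset Sd, c θ' * κ (θ + s • (Pi.single d 1 : Fin D → ℝ)) θ'| ≤
          |∑ θ' ∈ Fintype.piFinset Sd, c θ' * κ (θ + t • (Pi.single d 1 : Fin D → ℝ)) θ'|) →
        t ∈ Sd d)

/-- in a CMF dictionary whose augmented grid `⊠(S*)` is axis admissible,
for every nonzero residual `r` in the span of the grid atoms and every `θ` outside the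
grid, the correlation `|⟨a(θ),r⟩|` is strictly below the best grid correlation; in
particular the correlation attains its maximum and all its global maximizers lie in
`⊠(S*)`. -/
theorem cmf_axis_admissible_grid_selection
    {D : ℕ} (hD : 1 ≤ D) {H : Type*} [NormedAddCommGroup H]
    [InnerProductSpace ℝ H] [CompleteSpace H]
    (φ : ℝ → ℝ) (hφ : IsCMF φ) (hφ0 : φ 0 = 1)
    (hφtop : Filter.Tendsto φ Filter.atTop (nhds 0))
    (p : ℝ) (hp0 : 0 < p) (hp1 : p ≤ 1)
    (a : (Fin D → ℝ) → H) (ha : Continuous a)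
    (κ : (Fin D → ℝ) → (Fin D → ℝ) → ℝ)
    (hκdef : ∀ θ θ' : Fin D → ℝ, κ θ θ' = φ (pPowSum p (θ - θ')))
    (hκa : ∀ θ θ' : Fin D → ℝ, (inner ℝ (a θ) (a θ') : ℝ) = κ θ θ')
    (k : ℕ) (θstar : Fin k → (Fin D → ℝ)) (hinj : Function.Injective θstar)
    (haxis : AxisAdmissible
      (fun d => Finset.image (fun ℓ => θstar ℓ d) Finset.univ) κ)
    (r : H) (hr : r ≠ 0)
    (hrspan : r ∈ Submodule.span ℝ (a '' (SetAug θstar : Set (Fin D → ℝ)))) :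
    (∀ θ : Fin D → ℝ, θ ∉ SetAug θstar →
      ∃ θ'' ∈ SetAug θstar, |(inner ℝ (a θ) r : ℝ)| < |(inner ℝ (a θ'') r : ℝ)|) ∧
    (∃ θm : Fin D → ℝ, ∀ θ : Fin D → ℝ,
      |(inner ℝ (a θ) r : ℝ)| ≤ |(inner ℝ (a θm) r : ℝ)|) ∧
    (∀ θm : Fin D → ℝ,
      (∀ θ : Fin D → ℝ, |(inner ℝ (a θ) r : ℝ)| ≤ |(inner ℝ (a θm) r : ℝ)|) →
      θm ∈ SetAug θstar) := by
    classical
  set Sd : Fin D → Finset ℝ := fun d => Finset.image (fun ℓ => θstar ℓ d) Finset.univ with hSd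
  set G : Finset (Fin D → ℝ) := Fintype.piFinset Sd with hG
  have hGA : SetAug θstar = G := rfl
  rw [hGA] at hrspan
  -- coefficients
  have himg : a '' (G : Set (Fin D → ℝ)) = Set.range (fun x : (G : Set (Fin D → ℝ)) => a x) :=
    Set.image_eq_range _ _
  rw [himg] at hrspan
  obtain ⟨c, hc⟩ := (Submodule.mem_span_range_iff_exists_fun ℝ).mp hrspan
  set C : (Fin D → ℝ) → ℝ := fun θ' => if h : θ' ∈ G then c ⟨θ', h⟩ else 0 with hC
  have hg : ∀ θ : Fin D → ℝ, (inner ℝ (a θ) r : ℝ) = ∑ θ' ∈ G, C θ' * κ θ θ' := by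
    intro θ
    rw [← hc, inner_sum]
    rw [← Finset.sum_attach G (fun θ' => C θ' * κ θ θ')]
    apply Finset.sum_congr rfl
    intro x _
    rw [real_inner_smul_right, hκa]
    simp [hC, x.2]
  set absF : (Fin D → ℝ) → ℝ := fun θ => |∑ θ' ∈ G, C θ' * κ θ θ'| with habsF
  have habs : ∀ θ, |(inner ℝ (a θ) r : ℝ)| = absF θ := fun θ => by rw [hg θ]
  -- nonvanishing on the grid
  have hpos : ∃ θ0 ∈ G, (inner ℝ (a θ0) r : ℝ) ≠ 0 := by
    by_contra h
    push_neg at h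
    apply hr
    have h0 : (inner ℝ r r : ℝ) = 0 := by
      nth_rewrite 1 [← hc]
      rw [sum_inner]
      refine Finset.sum_eq_zero fun x _ => ?_
      rw [real_inner_smul_left, h x.1 x.2, mul_zero]
    exact inner_self_eq_zero.mp h0
  obtain ⟨θ0, hθ0G, hθ0⟩ := hpos
  have hGne : G.Nonempty := ⟨θ0, hθ0G⟩
  set M : ℝ := G.sup' hGne absF with hM
  have hMpos : 0 < M := by
    have : absF θ0 ≤ M := Finset.le_sup' absF hθ0G
    have h0 : 0 < absF θ0 := by rw [← habs]; exact abs_pos.mpr hθ0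
    linarith
  -- update identity
  have hupd : ∀ (θ : Fin D → ℝ) (d : Fin D) (t : ℝ),
      Function.update θ d 0 + t • (Pi.single d 1 : Fin D → ℝ) = Function.update θ d t := by
    intro θ d t; funext i
    by_cases h : i = d
    · subst h; simp
    · simp [Function.update_of_ne h, Pi.single_eq_of_ne h]
  -- key induction: global bound
  have key : ∀ n : ℕ, ∀ θ : Fin D → ℝ, (∀ i : Fin D, n ≤ (i : ℕ) → θ i ∈ Sd i) → absF θ ≤ M := by
    intro n
    induction n with
    | zero =>
      intro θ hθ
      exact Finset.le_sup' absF (by rw [hG, Fintype.mem_piFinset]; exact fun i => hθ i (Nat.zero_le _))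
    | succ n ih =>
      intro θ hθ
      by_cases hn : n < D
      · set d : Fin D := ⟨n, hn⟩ with hd
        by_cases hzero : ∀ t : ℝ,
            |∑ θ' ∈ Fintype.piFinset Sd, C θ' * κ (Function.update θ d 0 + t • (Pi.single d 1 : Fin D → ℝ)) θ'| = 0
        · have h0 := hzero (θ d)
          rw [hupd, Function.update_eq_self] at h0
          have : absF θ = 0 := h0
          linarith
        · obtain ⟨⟨t, ht⟩, hmem⟩ := haxis d (Function.update θ d 0) (by simp) C hzero
          have htS : t ∈ Sd d := hmem t ht
          have hle : absF θ ≤ absF (Function.update θ d t) := by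
            have h1 := ht (θ d)
            rw [hupd, hupd, Function.update_eq_self] at h1
            exact h1
          refine hle.trans (ih _ fun i hi => ?_)
          rcases eq_or_ne i d with rfl | hne
          · simpa using htS
          · rw [Function.update_of_ne hne]
            refine hθ i ?_
            have : (i : ℕ) ≠ n := fun h => hne (Fin.ext h)
            omega
      · exact ih θ fun i hi => absurd hi (by omega)
  have keyAll : ∀ θ : Fin D → ℝ, absF θ ≤ M := fun θ =>
    key D θ (fun i hi => absurd hi (by omega))
  -- strict bound outside the grid
  have keyB : ∀ θ : Fin D → ℝ, θ ∉ G → absF θ < M := by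
    intro θ hθG
    rw [hG, Fintype.mem_piFinset] at hθG
    push_neg at hθG
    obtain ⟨d, hd⟩ := hθG
    by_cases hzero : ∀ t : ℝ,
        |∑ θ' ∈ Fintype.piFinset Sd, C θ' * κ (Function.update θ d 0 + t • (Pi.single d 1 : Fin D → ℝ)) θ'| = 0
    · have h0 := hzero (θ d)
      rw [hupd, Function.update_eq_self] at h0
      have : absF θ = 0 := h0
      linarith
    · obtain ⟨⟨t, ht⟩, hmem⟩ := haxis d (Function.update θ d 0) (by simp) C hzero
      have hnotmax : ¬ ∀ s : ℝ,
          |∑ θ' ∈ Fintype.piFinset Sd, C θ' * κ (Function.update θ d 0 + s • (Pi.single d 1 : Fin D → ℝ)) θ'| ≤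
            |∑ θ' ∈ Fintype.piFinset Sd, C θ' * κ (Function.update θ d 0 + (θ d) • (Pi.single d 1 : Fin D → ℝ)) θ'| :=
        fun h => hd (hmem (θ d) h)
      push_neg at hnotmax
      obtain ⟨s, hs⟩ := hnotmax
      rw [hupd, hupd, Function.update_eq_self] at hs
      have h2 := ht s
      rw [hupd, hupd] at h2
      have h1 : absF θ < absF (Function.update θ d s) := hs
      have h2' : absF (Function.update θ d s) ≤ absF (Function.update θ d t) := h2
      have h3 : absF (Function.update θ d t) ≤ M := keyAll _
      linarith
  -- assemble
  obtain ⟨θM, hθMG, hθM⟩ := Finset.exists_mem_eq_sup' hGne absF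
  refine ⟨?_, ⟨θM, ?_⟩, ?_⟩
  · intro θ hθ
    rw [hGA] at hθ ⊢
    exact ⟨θM, hθMG, by rw [habs, habs, ← hθM]; exact keyB θ hθ⟩
  · intro θ
    rw [habs, habs, ← hθM]
    exact keyAll θ
  · intro θm hθm
    rw [hGA]
    by_contra hout
    have h1 : absF θm < M := keyB θm hout
    have h2 : absF θM ≤ absF θm := by rw [← habs, ← habs]; exact hθm θM
    rw [← hθM] at h2
    linarith
end

section
/- Let k ≥ 1, let 0 < λ₁ < λ₂ < … < λ_k be reals and c₁,…,c_k be nonzero reals, and define P(u) = Σ_{ℓ=1}^k c_ℓ · e^{−λ_ℓ u} for u ≥ 0. Assume: the sequence (c₁,…,c_k) has at most two sign changes, i.e. the number of indices ℓ ∈ {1,…,k−1} with c_ℓ · c_{ℓ+1} < 0 is at most 2; P(0) < 0; and P(u) > 0 for all sufficiently large u. Then there exists u₀ > 0 such that P(u) < 0 for all u ∈ [0, u₀), P(u) > 0 for all u > u₀, and for every nondecreasing function f : [0,∞) → ℝ and every nonnegative finite Borel measure ν on [0,∞) for which u ↦ f(u)P(u) and u ↦ P(u) are ν-integrable, one has ∫₀^∞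 f(u) P(u) dν(u) ≥ f(u₀) · ∫₀^∞ P(u) dν(u). -/
/-!
Descartes' rule of signs for exponential sums: if the coefficients of
`P(u) = Σ c_ℓ e^{-λ_ℓ u}` have at most `m` sign changes, then `P` cannot weakly alternate in
sign at `m + 2` increasing points. With no sign change all terms share one sign. Otherwise pick
a sign change between `λ_j` and `λ_{j+1}` and a `μ` strictly between them: `e^{μu} P(u)` is again
an exponential sum, its derivative has coefficients `c_ℓ (μ - λ_ℓ)`, which lose the sign change
at `j` and keep all others, and by the mean value theorem the derivative weakly alternates at
`m + 1` points.

Since `P(0) < 0` and `P > 0` eventually, the first zero `u₀` of `P` is its only sign change: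
a later point with `P ≤ 0` would give three alternations against two coefficient sign changes.
Then `(f u - f u₀) P u ≥ 0` on `[0, ∞)` for monotone `f`, and integrating gives the inequality.
-/

open MeasureTheory Finset

noncomputable def expSum (k : ℕ) (c lam : ℕ → ℝ) (u : ℝ) : ℝ :=
  ∑ ℓ ∈ range k, c ℓ * Real.exp (-(lam ℓ * u))

noncomputable def signChanges (k : ℕ) (c : ℕ → ℝ) : ℕ :=
  ((range (k - 1)).filter fun ℓ => c ℓ * c (ℓ + 1) < 0).card

section SignChanges

variable {k : ℕ} {c : ℕ → ℝ}

theorem mul_pos_of_signChanges_eq_zero (hc : ∀ ℓ < k, c ℓ ≠ 0) (h : signChanges k c = 0) :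
    ∀ ℓ < k, 0 < c 0 * c ℓ := by
  simp only [signChanges, card_eq_zero, filter_eq_empty_iff, mem_range, not_lt] at h
  intro ℓ hℓ
  induction ℓ with
  | zero => exact mul_self_pos.2 (hc 0 hℓ)
  | succ n ih =>
    have h0n := ih (by omega)
    have hn : 0 < c n * c (n + 1) :=
      (h (by omega)).lt_of_ne (mul_ne_zero (hc n (by omega)) (hc (n + 1) hℓ)).symm
    nlinarith [mul_pos h0n hn, sq_nonneg (c n)]

theorem signChanges_mul_lt {j : ℕ} {w : ℕ → ℝ} (hj : j + 1 < k) (hcj : c j * c (j + 1) < 0)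
    (hw_pos : ∀ ℓ ≤ j, 0 < w ℓ) (hw_neg : ∀ ℓ, j < ℓ → ℓ < k → w ℓ < 0) :
    signChanges k (fun ℓ => c ℓ * w ℓ) < signChanges k c := by
  have hj_mem : j ∈ (range (k - 1)).filter fun ℓ => c ℓ * c (ℓ + 1) < 0 := by
    simp only [mem_filter, mem_range]; exact ⟨by omega, hcj⟩
  refine (card_le_card fun ℓ hℓ => ?_).trans_lt (card_erase_lt_of_mem hj_mem)
  simp only [mem_filter, mem_erase, mem_range] at hℓ ⊢
  obtain ⟨hℓk, hℓ⟩ := hℓ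
  rcases lt_trichotomy ℓ j with hlt | rfl | hgt
  · have := mul_pos (hw_pos ℓ hlt.le) (hw_pos (ℓ + 1) hlt)
    exact ⟨hlt.ne, hℓk, by nlinarith⟩
  · exfalso
    have hw := mul_neg_of_pos_of_neg (hw_pos ℓ le_rfl) (hw_neg (ℓ + 1) (by omega) hj)
    nlinarith [mul_pos_of_neg_of_neg hcj hw]
  · have := mul_pos_of_neg_of_neg (hw_neg ℓ hgt (by omega)) (hw_neg (ℓ + 1) (by omega) (by omega))
    exact ⟨hgt.ne', hℓk, by nlinarith⟩

end SignChanges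

theorem mul_nonpos_of_neg_one_pow_mul_nonneg {i e : ℕ} {a b : ℝ} (ha : 0 ≤ (-1) ^ (i + e) * a)
    (hb : 0 ≤ (-1) ^ (i + 1 + e) * b) : a * b ≤ 0 := by
  have hsq : ((-1 : ℝ) ^ (i + e)) ^ 2 = 1 := by rw [pow_right_comm, neg_one_sq, one_pow]
  have hab : (-1) ^ (i + e) * a * ((-1) ^ (i + 1 + e) * b) = -(a * b) := by
    linear_combination (-(a * b)) * hsq
  linarith [mul_nonneg ha hb]

section ExpSum

variable {k : ℕ} {c lam : ℕ → ℝ}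

theorem hasDerivAt_expSum (u : ℝ) :
    HasDerivAt (expSum k c lam) (expSum k (fun ℓ => c ℓ * -lam ℓ) lam u) u := by
  unfold expSum
  refine HasDerivAt.fun_sum fun ℓ _ => ?_
  exact ((((hasDerivAt_id' u).const_mul (lam ℓ)).fun_neg.exp).const_mul (c ℓ)).congr_deriv
    (by ring)

theorem continuous_expSum : Continuous (expSum k c lam) :=
  continuous_iff_continuousAt.2 fun u => (hasDerivAt_expSum u).continuousAt

theorem expSum_sub_const (μ u : ℝ) :
    expSum k c (fun ℓ => lam ℓ - μ) u = Real.exp (μ * u) * expSum k c lam u := by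
  simp only [expSum, mul_sum, mul_left_comm _ (c _), ← Real.exp_add]
  congr! 3; ring

theorem mul_expSum_pos_of_signChanges_eq_zero (hk : 1 ≤ k) (hc : ∀ ℓ < k, c ℓ ≠ 0)
    (h : signChanges k c = 0) (u : ℝ) : 0 < c 0 * expSum k c lam u := by
  rw [expSum, mul_sum]
  refine sum_pos (fun ℓ hℓ => ?_) (nonempty_range_iff.2 (by omega))
  rw [← mul_assoc]
  exact mul_pos (mul_pos_of_signChanges_eq_zero hc h ℓ (mem_range.1 hℓ)) (Real.exp_pos _)

theorem signChanges_pos_of_mul_nonpos (hk : 1 ≤ k) (hc : ∀ ℓ < k, c ℓ ≠ 0) {u v : ℝ}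
    (huv : expSum k c lam u * expSum k c lam v ≤ 0) : 0 < signChanges k c := by
  by_contra! h
  have hu := mul_expSum_pos_of_signChanges_eq_zero (lam := lam) hk hc (by omega) u
  have hv := mul_expSum_pos_of_signChanges_eq_zero (lam := lam) hk hc (by omega) v
  nlinarith [mul_pos hu hv, sq_nonneg (c 0)]

/-- `(-1) ^ (i + e) * P (t i) ≥ 0` for all `i` says that `P` weakly alternates in sign along `t`,
starting with the sign `(-1) ^ e`. -/
theorem expSum_not_weakly_alternating (hk : 1 ≤ k)
    (hmono : ∀ ℓ, ℓ + 1 < k → lam ℓ < lam (ℓ + 1)) (hc : ∀ ℓ < k, c ℓ ≠ 0) {m : ℕ}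
    (hm : signChanges k c ≤ m) {t : Fin (m + 2) → ℝ} (ht : StrictMono t) (e : ℕ) :
    ¬ ∀ i : Fin (m + 2), 0 ≤ (-1) ^ (i + e : ℕ) * expSum k c lam (t i) := by
  induction m generalizing c lam e with
  | zero =>
    intro halt
    have := signChanges_pos_of_mul_nonpos hk hc
      (mul_nonpos_of_neg_one_pow_mul_nonneg (halt 0) (halt 1))
    omega
  | succ m ih =>
    intro halt
    obtain ⟨j, hj⟩ := card_pos.1 <| signChanges_pos_of_mul_nonpos hk hc
      (mul_nonpos_of_neg_one_pow_mul_nonneg (halt 0) (halt 1))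
    obtain ⟨hjk, hcj⟩ : j < k - 1 ∧ c j * c (j + 1) < 0 := by simpa using hj
    have hlam : MonotoneOn lam (Set.Iio k) :=
      (strictMonoOn_of_lt_add_one Set.ordConnected_Iio fun ℓ _ _ h => hmono ℓ h).monotoneOn
    obtain ⟨μ, hμj, hμj'⟩ := exists_between (hmono j (by omega))
    have hμ_lo : ∀ ℓ ≤ j, lam ℓ < μ := fun ℓ hℓ =>
      (hlam (Set.mem_Iio.2 (by omega)) (Set.mem_Iio.2 (by omega)) hℓ).trans_lt hμj
    have hμ_hi : ∀ ℓ, j < ℓ → ℓ < k → μ < lam ℓ := fun ℓ hjℓ hℓ =>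
      hμj'.trans_le (hlam (Set.mem_Iio.2 (by omega)) hℓ hjℓ)
    have hc' : ∀ ℓ < k, c ℓ * -(lam ℓ - μ) ≠ 0 := by
      intro ℓ hℓ
      refine mul_ne_zero (hc ℓ hℓ) ?_
      rcases le_or_gt ℓ j with h | h
      · linarith [hμ_lo ℓ h]
      · linarith [hμ_hi ℓ h hℓ]
    have hm' : signChanges k (fun ℓ => c ℓ * -(lam ℓ - μ)) ≤ m := by
      have := signChanges_mul_lt (k := k) (j := j) (w := fun ℓ => -(lam ℓ - μ)) (by omega) hcj
        (fun ℓ hℓ => by linarith [hμ_lo ℓ hℓ]) (fun ℓ hjℓ hℓ => by linarith [hμ_hi ℓ hjℓ hℓ])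
      omega
    choose ξ hξ hslope using fun i : Fin (m + 2) =>
      exists_hasDerivAt_eq_slope _ _ (ht (Fin.castSucc_lt_succ (i := i)))
        continuous_expSum.continuousOn
        fun u _ => hasDerivAt_expSum (k := k) (c := c) (lam := fun ℓ => lam ℓ - μ) u
    refine ih (fun ℓ hℓ => sub_lt_sub_right (hmono ℓ hℓ) μ) hc' hm' (t := ξ)
      (Fin.strictMono_iff_lt_succ.2 fun i => ?_) (e + 1) fun i => ?_
    · exact (hξ _).2.trans (by rw [Fin.succ_castSucc]; exact (hξ _).1)
    · have ha := halt i.castSucc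
      have hb := halt i.succ
      rw [Fin.val_castSucc] at ha
      rw [Fin.val_succ] at hb
      rw [hslope, expSum_sub_const, expSum_sub_const, ← mul_div_assoc]
      refine div_nonneg ?_ (sub_pos.2 (ht (Fin.castSucc_lt_succ (i := i)))).le
      calc (0 : ℝ)
          ≤ Real.exp (μ * t i.succ) * ((-1) ^ (↑i + 1 + e) * expSum k c lam (t i.succ)) +
            Real.exp (μ * t i.castSucc) * ((-1) ^ (↑i + e) * expSum k c lam (t i.castSucc)) :=
            add_nonneg (mul_nonneg (Real.exp_pos _).le hb) (mul_nonneg (Real.exp_pos _).le ha)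
        _ = _ := by ring

end ExpSum

theorem Continuous.exists_pos_forall_neg_of_nonneg {P : ℝ → ℝ} (hP : Continuous P)
    (h0 : P 0 < 0) {M : ℝ} (hM0 : 0 ≤ M) (hM : 0 ≤ P M) :
    ∃ u₀, 0 < u₀ ∧ 0 ≤ P u₀ ∧ ∀ u, 0 ≤ u → u < u₀ → P u < 0 := by
  set S := Set.Ici 0 ∩ {u | 0 ≤ P u}
  have hS : IsClosed S := isClosed_Ici.inter (isClosed_le continuous_const hP)
  have hbdd : BddBelow S := ⟨0, fun u hu => hu.1⟩
  obtain ⟨hu₀, hPu₀⟩ : sInf S ∈ S := hS.csInf_mem ⟨M, hM0, hM⟩ hbdd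
  refine ⟨sInf S, hu₀.lt_of_ne ?_, hPu₀, fun u hu huu => ?_⟩
  · exact fun h => h0.not_ge (h ▸ hPu₀)
  · by_contra! hPu
    exact huu.not_ge (csInf_le hbdd ⟨hu, hPu⟩)

theorem mul_integral_le_integral_mul_of_monotoneOn {f g : ℝ → ℝ} {u₀ : ℝ} (hu₀ : 0 ≤ u₀)
    (hf : MonotoneOn f (Set.Ici 0)) (hg_neg : ∀ u, 0 ≤ u → u < u₀ → g u ≤ 0)
    (hg_pos : ∀ u, u₀ < u → 0 ≤ g u) {ν : Measure ℝ} (hν : ν (Set.Iio 0) = 0)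
    (hfg : Integrable (fun u => f u * g u) ν) (hg : Integrable g ν) :
    f u₀ * ∫ u, g u ∂ν ≤ ∫ u, f u * g u ∂ν := by
  rw [← integral_const_mul]
  refine integral_mono_ae (hg.const_mul _) hfg ?_
  filter_upwards [measure_eq_zero_iff_ae_notMem.1 hν] with u hu
  rw [Set.mem_Iio, not_lt] at hu
  rcases lt_or_ge u u₀ with h | h
  · exact mul_le_mul_of_nonpos_right (hf hu hu₀ h.le) (hg_neg u hu h)
  · rcases h.eq_or_lt with rfl | h
    · exact le_rfl
    · exact mul_le_mul_of_nonneg_right (hf hu₀ hu h.le) (hg_pos u h)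

theorem exp_polynomial_one_sign_change_general
    (k : ℕ) (hk : 1 ≤ k) (lam : ℕ → ℝ) (c : ℕ → ℝ)
    (hmono : ∀ ℓ : ℕ, ℓ + 1 < k → lam ℓ < lam (ℓ + 1))
    (hc : ∀ ℓ < k, c ℓ ≠ 0)
    (hsign : ((Finset.range (k - 1)).filter fun ℓ => c ℓ * c (ℓ + 1) < 0).card ≤ 2)
    (P : ℝ → ℝ)
    (hP : ∀ u : ℝ, P u = ∑ ℓ ∈ Finset.range k, c ℓ * Real.exp (-(lam ℓ * u)))
    (hP0 : P 0 < 0) (hPtop : ∃ M : ℝ, ∀ u ≥ M, 0 < P u) :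
    ∃ u₀ : ℝ, 0 < u₀ ∧
      (∀ u : ℝ, 0 ≤ u → u < u₀ → P u < 0) ∧
      (∀ u : ℝ, u₀ < u → 0 < P u) ∧
      ∀ f : ℝ → ℝ, MonotoneOn f (Set.Ici 0) →
        ∀ ν : Measure ℝ, IsFiniteMeasure ν → ν (Set.Iio 0) = 0 →
          Integrable (fun u => f u * P u) ν → Integrable P ν →
          f u₀ * ∫ u, P u ∂ν ≤ ∫ u, f u * P u ∂ν := by
  obtain rfl : P = expSum k c lam := funext hP
  obtain ⟨M, hM⟩ := hPtop
  obtain ⟨u₀, hu₀, hPu₀, hneg⟩ := continuous_expSum.exists_pos_forall_neg_of_nonneg hP0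
    (le_max_right M 0) (hM _ (le_max_left M 0)).le
  have hpos : ∀ u, u₀ < u → 0 < expSum k c lam u := by
    intro u hu
    by_contra! hPu
    refine expSum_not_weakly_alternating hk hmono hc hsign
      (t := ![0, u₀, u, max M (u + 1)]) ?_ 1 fun i => ?_
    · refine Fin.strictMono_iff_lt_succ.2 fun i => ?_
      fin_cases i <;>
        simp only [Fin.isValue, Fin.castSucc_zero, Fin.succ_zero_eq_one, Fin.castSucc_one,
          Fin.succ_one_eq_two, Fin.reduceFinMk, Fin.reduceCastSucc, Fin.reduceSucc,
          Matrix.cons_val] <;>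
        linarith [le_max_right M (u + 1)]
    · have := (hM _ (le_max_left M (u + 1))).le
      fin_cases i <;> simp only [Fin.reduceFinMk, Matrix.cons_val, Nat.reduceAdd] <;> linarith
  exact ⟨u₀, hu₀, hneg, hpos, fun f hf ν _ hν hfP hPν =>
    mul_integral_le_integral_mul_of_monotoneOn hu₀.le hf (fun u hu huu => (hneg u hu huu).le)
      (fun u hu => (hpos u hu).le) hν hfP hPν⟩

/-- an exponential polynomial `P(u) = Σ_ℓ c_ℓ e^{-λ_ℓ u}` with
`0 < λ₁ < … < λ_k`, nonzero coefficients with at most two sign changes, `P(0) < 0`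
and `P > 0` for large `u`, has a unique sign change at some `u₀ > 0`, and for any
nondecreasing `f` on `[0,∞)` and any nonnegative finite Borel measure `ν` on `[0,∞)`
(for which the integrals converge) one has
`∫ f·P dν ≥ f(u₀) ∫ P dν`. -/
theorem exp_polynomial_one_sign_change
    (k : ℕ) (hk : 1 ≤ k) (lam : ℕ → ℝ) (c : ℕ → ℝ)
    (hpos : ∀ ℓ < k, 0 < lam ℓ)
    (hmono : ∀ ℓ : ℕ, ℓ + 1 < k → lam ℓ < lam (ℓ + 1))
    (hc : ∀ ℓ < k, c ℓ ≠ 0)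
    (hsign : ((Finset.range (k - 1)).filter fun ℓ => c ℓ * c (ℓ + 1) < 0).card ≤ 2)
    (P : ℝ → ℝ)
    (hP : ∀ u : ℝ, P u = ∑ ℓ ∈ Finset.range k, c ℓ * Real.exp (-(lam ℓ * u)))
    (hP0 : P 0 < 0) (hPtop : ∃ M : ℝ, ∀ u ≥ M, 0 < P u) :
    ∃ u₀ : ℝ, 0 < u₀ ∧
      (∀ u : ℝ, 0 ≤ u → u < u₀ → P u < 0) ∧
      (∀ u : ℝ, u₀ < u → 0 < P u) ∧
      ∀ f : ℝ → ℝ, MonotoneOn f (Set.Ici 0) →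
        ∀ ν : Measure ℝ, IsFiniteMeasure ν → ν (Set.Iio 0) = 0 →
          Integrable (fun u => f u * P u) ν → Integrable P ν →
          f u₀ * ∫ u, P u ∂ν ≤ ∫ u, f u * P u ∂ν :=
  exp_polynomial_one_sign_change_general k hk lam c hmono hc hsign P hP hP0 hPtop
end

section
/- Let θ₁, θ₂ ∈ ℝ with θ₁ ≠ θ₂ and let c₁, c₂ > 0. Define f : ℝ → ℝ by f(θ) = c₁ · e^{−(θ−θ₁)²/4} + c₂ · e^{−(θ−θ₂)²/4}. Then f attains its maximum over ℝ, and no global maximizer of f belongs to {θ₁, θ₂}; in particular, Orthogonal Matching Pursuit applied to the positive combination y = c₁ a(θ₁) + c₂ a(θ₂) of two normalized Gaussian atoms a(θ) = π^{−1/4} e^{−(·−θ)²/2} ∈ L²(ℝ), whose correlation function is θ ↦ |⟨a(θ), y⟩| = f(θ), never selects a parameter in {θ₁, θ₂} at its first iteration. -/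
/-!
At a global maximizer the derivative of `f` vanishes. At `θ₁` the first bump is flat, so
`f'(θ₁) = c₂ e^{-(θ₁-θ₂)²/4} (θ₂ - θ₁)/2 ≠ 0`, and symmetrically at `θ₂`. Existence of a maximizer
holds because `f` is continuous, positive, and tends to `0` at infinity.
-/

open Filter Real Topology

lemma tendsto_exp_neg_sq_sub_div_cocompact (a : ℝ) {b : ℝ} (hb : 0 < b) :
    Tendsto (fun θ : ℝ => exp (-((θ - a) ^ 2 / b))) (cocompact ℝ) (𝓝 0) := by
  have hsq : Tendsto (fun θ : ℝ => (θ - a) ^ 2) (cocompact ℝ) atTop := by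
    simpa only [Function.comp_def, Real.dist_eq, sq_abs] using
      (tendsto_pow_atTop two_ne_zero).comp (tendsto_dist_right_cocompact_atTop a)
  exact tendsto_exp_neg_atTop_nhds_zero.comp (hsq.atTop_div_const hb)

lemma hasDerivAt_exp_neg_sq_sub_div (a b θ : ℝ) :
    HasDerivAt (fun θ : ℝ => exp (-((θ - a) ^ 2 / b)))
      (exp (-((θ - a) ^ 2 / b)) * (-(2 * (θ - a) / b))) θ := by
  have hinner : HasDerivAt (fun θ : ℝ => -((θ - a) ^ 2 / b)) (-(2 * (θ - a) / b)) θ := by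
    refine ((((hasDerivAt_id' θ).sub_const a).fun_pow 2).div_const b).fun_neg.congr_deriv ?_
    ring
  exact hinner.exp

lemma Continuous.exists_forall_ge_of_tendsto_cocompact {X β : Type*} [TopologicalSpace X]
    [TopologicalSpace β] [LinearOrder β] [OrderClosedTopology β] {f : X → β}
    (hf : Continuous f) {b : β} (hlim : Tendsto f (cocompact X) (𝓝 b)) {x₀ : X}
    (hx₀ : b < f x₀) : ∃ x, ∀ y, f y ≤ f x :=
  hf.exists_forall_ge' x₀ <| (hlim.eventually_lt_const hx₀).mono fun _ => le_of_lt

lemma not_isLocalMax_add_gaussian_at_center {a a' b : ℝ} (ha : a ≠ a') (hb : b ≠ 0) (c : ℝ)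
    {c' : ℝ} (hc' : c' ≠ 0) :
    ¬ IsLocalMax (fun θ => c * exp (-((θ - a) ^ 2 / b)) + c' * exp (-((θ - a') ^ 2 / b))) a := by
  intro hmax
  have hderiv := ((hasDerivAt_exp_neg_sq_sub_div a b a).const_mul c).add
    ((hasDerivAt_exp_neg_sq_sub_div a' b a).const_mul c')
  have hzero := hmax.hasDerivAt_eq_zero hderiv
  simp only [sub_self, mul_zero, zero_div, neg_zero, zero_add] at hzero
  simp [hc', hb, sub_ne_zero.mpr ha, exp_ne_zero] at hzero

/-- for two distinct Gaussian atoms and positive coefficients, the OMP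
first-iteration correlation `f(θ) = c₁ e^{-(θ-θ₁)²/4} + c₂ e^{-(θ-θ₂)²/4}` attains its
maximum over `ℝ`, but no global maximizer belongs to `{θ₁, θ₂}`: OMP never selects a
true parameter at its first iteration. -/
theorem gaussian_omp_first_iteration_fails
    (θ₁ θ₂ : ℝ) (hne : θ₁ ≠ θ₂) (c₁ c₂ : ℝ) (hc₁ : 0 < c₁) (hc₂ : 0 < c₂)
    (f : ℝ → ℝ)
    (hf : ∀ θ : ℝ, f θ =
      c₁ * Real.exp (-((θ - θ₁) ^ 2 / 4)) + c₂ * Real.exp (-((θ - θ₂) ^ 2 / 4))) :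
    (∃ θm : ℝ, ∀ θ : ℝ, f θ ≤ f θm) ∧
    ∀ θm : ℝ, (∀ θ : ℝ, f θ ≤ f θm) → θm ≠ θ₁ ∧ θm ≠ θ₂ := by
  obtain rfl : f = fun θ => c₁ * exp (-((θ - θ₁) ^ 2 / 4)) + c₂ * exp (-((θ - θ₂) ^ 2 / 4)) :=
    funext hf
  refine ⟨?_, fun θm hmax => ?_⟩
  · have hcont : Continuous fun θ =>
        c₁ * exp (-((θ - θ₁) ^ 2 / 4)) + c₂ * exp (-((θ - θ₂) ^ 2 / 4)) := by fun_prop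
    have hlim := ((tendsto_exp_neg_sq_sub_div_cocompact θ₁ four_pos).const_mul c₁).add
      ((tendsto_exp_neg_sq_sub_div_cocompact θ₂ four_pos).const_mul c₂)
    rw [mul_zero, mul_zero, add_zero] at hlim
    exact hcont.exists_forall_ge_of_tendsto_cocompact hlim (x₀ := θ₁) (by positivity)
  have hloc : IsLocalMax _ θm := Eventually.of_forall hmax
  constructor
  · rintro rfl
    exact not_isLocalMax_add_gaussian_at_center hne four_ne_zero c₁ hc₂.ne' hloc
  · rintro rfl
    simp only [add_comm (c₁ * _)] at hloc
    exact not_isLocalMax_add_gaussian_at_center hne.symm four_ne_zero c₂ hc₁.ne' hloc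
end
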